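/- arXiv:2011.09866 — 4 statements merged into one kernel-verified Lean document; each statement's English description precedes it below -/
import Mathlib

section
/- There exists a class ℒ of recursive languages such that ℒ ∈ [TxtItEx_C]_REC but ℒ ∉ [TxtGCIndBc_C]_REC; that is, some partial computable iterative learner Ex_C-learns every member of ℒ, but no partial computable Gold-style (full-information) learner that outputs only C-indices on texts of languages in ℒ can Bc_C-learn every member of ℒ. -/
namespace InductiveInference

/-- `φ_e` : the `e`-th partial computable function, via the standard numbering
of `Nat.Partrec.Code`. -/
def phi (e : ℕ) : ℕ →. ℕ := (Denumerable.ofNat Nat.Partrec.Code e).eval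

/-- `W_e` : the domain of `φ_e`. -/
def Wset (e : ℕ) : Set ℕ := (phi e).Dom

/-- `e` is a C-index: `φ_e` is total with values in `{0,1}`. -/
def CIndex (e : ℕ) : Prop := ∀ x, phi e x = Part.some 0 ∨ phi e x = Part.some 1

/-- `C_e = {x | φ_e x = 1}`. -/
def Cset (e : ℕ) : Set ℕ := {x | phi e x = Part.some 1}

/-- A language is recursive (decidable). -/
def RecLang (L : Set ℕ) : Prop := ∃ f : ℕ → Bool, Computable f ∧ ∀ x, x ∈ L ↔ f x = true

/-- Texts: total functions `ℕ → ℕ ∪ {#}`; `none` is the pause symbol `#`. -/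
abbrev Text := ℕ → Option ℕ

/-- The content of a text: its range minus the pause symbol. -/
def content (T : Text) : Set ℕ := {x | ∃ n, T n = some x}

/-- The initial segment `T[n] = (T 0, …, T (n-1))`. -/
def initSeg (T : Text) (n : ℕ) : List (Option ℕ) := (List.range n).map T

/-- The (finite) content of the initial segment `T[n]`. -/
def fincontent (T : Text) (n : ℕ) : Finset ℕ := ((initSeg T n).filterMap id).toFinset

/-- A canonical numerical code for a finite set of naturals. -/
def setCode (D : Finset ℕ) : ℕ := Encodable.encode (D.sort (· ≤ ·))

/-- Learners: partial functions on (suitably coded) natural number inputs. -/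
abbrev Learner := ℕ →. ℕ

/-- The learner is partial computable. -/
def PartComputable (h : Learner) : Prop := Nat.Partrec h

/-- The learner is total computable. -/
def TotalComputable (h : Learner) : Prop := Nat.Partrec h ∧ ∀ x, (h x).Dom

/-- Hypothesis sequences (possibly undefined at some points). -/
abbrev HypSeq := ℕ → Part ℕ

/-- Gold-style (full-information) learning: `G(h,T)(i) = h(T[i])`. -/
def Gop (h : Learner) (T : Text) (i : ℕ) : Part ℕ :=
  h (Encodable.encode (initSeg T i))

/-- Partially set-driven learning: `Psd(h,T)(i) = h(content T[i], i)`. -/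
def Psdop (h : Learner) (T : Text) (i : ℕ) : Part ℕ :=
  h (Nat.pair (setCode (fincontent T i)) i)

/-- Set-driven learning: `Sd(h,T)(i) = h(content T[i])`. -/
def Sdop (h : Learner) (T : Text) (i : ℕ) : Part ℕ :=
  h (setCode (fincontent T i))

/-- Iterative learning: the input `none` codes the empty start sequence `ε`,
and `some (e, x)` codes the pair of previous hypothesis `e` and datum `x`. -/
def Itop (h : Learner) (T : Text) : ℕ → Part ℕ
  | 0 => h (Encodable.encode (none : Option (ℕ × Option ℕ)))
  | i + 1 => (Itop h T i).bind fun e =>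
      h (Encodable.encode (some (e, T i) : Option (ℕ × Option ℕ)))

/-- Transductive learning: the learner receives the single (coded) datum
`T i`; the output `0` codes the distinguished symbol `?`, and the output
`e + 1` codes the hypothesis `e`.  The value `?` of the hypothesis sequence
is represented by `Part.none`. -/
def Tdop (h : Learner) (T : Text) : ℕ → Part ℕ
  | 0 => Part.none
  | i + 1 => (h (Encodable.encode (T i))).bind fun v =>
      match v with
      | 0 => Tdop h T i
      | e + 1 => Part.some e

/-- `Ex_C`: syntactic convergence to a single correct C-index. -/
def ExC (p : HypSeq) (T : Text) : Prop :=
  ∃ n₀, (∀ n, n₀ ≤ n → p n = p n₀) ∧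
    ∃ e, p n₀ = Part.some e ∧ CIndex e ∧ Cset e = content T

/-- `Ex_W`: syntactic convergence to a single correct W-index. -/
def ExW (p : HypSeq) (T : Text) : Prop :=
  ∃ n₀, (∀ n, n₀ ≤ n → p n = p n₀) ∧
    ∃ e, p n₀ = Part.some e ∧ Wset e = content T

/-- `Bc_C`: semantic convergence to correct C-indices. -/
def BcC (p : HypSeq) (T : Text) : Prop :=
  ∃ n₀, ∀ n, n₀ ≤ n → ∃ e, p n = Part.some e ∧ CIndex e ∧ Cset e = content T

/-- `Bc_W`: semantic convergence to correct W-indices. -/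
def BcW (p : HypSeq) (T : Text) : Prop :=
  ∃ n₀, ∀ n, n₀ ≤ n → ∃ e, p n = Part.some e ∧ Wset e = content T

/-- `CInd`: every hypothesis output is a C-index. -/
def CIndRes (p : HypSeq) (_T : Text) : Prop :=
  ∀ i e, p i = Part.some e → CIndex e

/-- `T`: the always-true restriction. -/
def TrueRes (_p : HypSeq) (_T : Text) : Prop := True

abbrev InteractionOp := Learner → Text → HypSeq
abbrev Restriction := HypSeq → Text → Prop

/-- Conjunction of restrictions. -/
def andRes (δ δ' : Restriction) : Restriction := fun p T => δ p T ∧ δ' p T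

/-- `h` `Txtβδ`-learns `L`: on every text for `L` the restriction `δ` holds. -/
def Learns (β : InteractionOp) (δ : Restriction) (h : Learner) (L : Set ℕ) : Prop :=
  ∀ T : Text, content T = L → δ (β h T) T

/-- The restriction `α` holds for `h` on all texts whatsoever. -/
def OnAllTexts (β : InteractionOp) (α : Restriction) (h : Learner) : Prop :=
  ∀ T : Text, α (β h T) T

/-- A class of recursive languages. -/
def IsRecClass (ℒ : Set (Set ℕ)) : Prop := ∀ L ∈ ℒ, RecLang L

/-- `[𝒞Txtβδ]_REC`: classes of recursive languages learnable by some
learner from `C` under interaction operator `β` and restriction `δ`. -/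
def LearnableREC (C : Learner → Prop) (β : InteractionOp) (δ : Restriction) :
    Set (Set (Set ℕ)) :=
  {ℒ | IsRecClass ℒ ∧ ∃ h, C h ∧ ∀ L ∈ ℒ, Learns β δ h L}

/-- `[τ(α)𝒞Txtβδ]_REC`: as above, where additionally `α` must hold on
arbitrary texts. -/
def TauLearnableREC (C : Learner → Prop) (α : Restriction) (β : InteractionOp)
    (δ : Restriction) : Set (Set (Set ℕ)) :=
  {ℒ | IsRecClass ℒ ∧ ∃ h, C h ∧ OnAllTexts β α h ∧ ∀ L ∈ ℒ, Learns β δ h L}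


/-!
For each candidate learner `φ_e`, the numbers `⟨e, ·⟩` serve to build, stage by stage, a finite
text segment `σ` that diagonalises against `φ_e`. Each waiting stage appends a fresh padding element
and searches, with a growing step bound, for a prefix of `σ` longer than the previous one on which
`φ_e` converges. Its output `p` is then asked, by running `φ_p` on a fresh query element, whether
that element belongs to `C_p`, and the construction puts it into `σ` exactly when `φ_p` says no.

If some question is never answered, the class contains the branch language: `σ` at that stage
together with infinitely many branch elements. On a text for it that starts with `σ`, the learner
outputs `p`, which is not a C-index. Otherwise the class contains the main language enumerated by
the whole construction; along its natural text the learner either diverges on all long prefixes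
or outputs infinitely many hypotheses, each wrong on its query. The main language is decidable
because, when nothing stalls, membership of a query is decided by running the hypothesis it was
put to. An iterative learner identifies both kinds of language: a branch element locks it onto
the branch language, and any other datum of column `e` leads it to the main language.
-/

open Nat.Partrec (Code)
open Nat.Partrec.Code
open Denumerable (ofNat)
open Encodable (encode)

theorem phi_encode (c : Code) : phi (encode c) = eval c := by
  simp [phi]

theorem CIndex.dom {c : ℕ} (hc : CIndex c) (x : ℕ) : (phi c x).Dom := by
  rcases hc x with h | h <;> simp [h]

def IsCIndexOf (c : ℕ) (L : Set ℕ) : Prop := CIndex c ∧ Cset c = L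

theorem isCIndexOf_of_phi {c : ℕ} {L : Set ℕ} (h₁ : ∀ x ∈ L, phi c x = Part.some 1)
    (h₀ : ∀ x ∉ L, phi c x = Part.some 0) : IsCIndexOf c L := by
  refine ⟨fun x => ?_, Set.ext fun x => ?_⟩
  · by_cases hx : x ∈ L
    · exact Or.inr (h₁ x hx)
    · exact Or.inl (h₀ x hx)
  · by_cases hx : x ∈ L
    · simp [Cset, h₁ x hx, hx]
    · simp [Cset, h₀ x hx, hx]

theorem IsCIndexOf.recLang {c : ℕ} {L : Set ℕ} (h : IsCIndexOf c L) : RecLang L := by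
  obtain ⟨hc, rfl⟩ := h
  refine ⟨fun x => decide ((phi c x).get (hc.dom x) = 1), ?_, fun x => ?_⟩
  · have hphi : Partrec (phi c) := Partrec.nat_iff.2 (exists_code.2 ⟨_, rfl⟩)
    exact Partrec.of_eq_tot
      (hphi.map (Primrec.eq.comp Primrec.snd (Primrec.const 1)).decide.to_comp.to₂)
      fun x => Part.mem_map _ (Part.get_mem _)
  · simp [Cset, Part.get_eq_iff_eq_some]

theorem exC_of_eventually_eq {p : HypSeq} {T : Text} {n₀ c : ℕ}
    (hp : ∀ n ≥ n₀, p n = Part.some c) (hc : IsCIndexOf c (content T)) : ExC p T :=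
  ⟨n₀, fun n hn => (hp n hn).trans (hp n₀ le_rfl).symm, c, hp n₀ le_rfl, hc⟩

theorem le_encode_const (n : ℕ) : n ≤ encode (Code.const n) := by
  induction n with
  | zero => exact Nat.zero_le _
  | succ n ih => exact Nat.succ_le_of_lt (ih.trans_lt (encode_lt_comp Code.succ _).2)

theorem lt_encode_curry (c : Code) (n : ℕ) : n < encode (c.curry n) :=
  calc n ≤ encode (Code.const n) := le_encode_const n
    _ < encode (Code.pair (Code.const n) Code.id) := (encode_lt_pair _ _).1
    _ < encode (c.curry n) := (encode_lt_comp _ _).2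

namespace Separation

def padElem (e s : ℕ) : ℕ := Nat.pair e (Nat.pair 0 s)

def queryElem (e t : ℕ) : ℕ := Nat.pair e (Nat.pair 1 t)

def branchElem (e t j : ℕ) : ℕ := Nat.pair e (Nat.pair 2 (Nat.pair t j))

def prefixCode (l : List ℕ) (m : ℕ) : ℕ := encode ((l.take m).map some)

theorem encode_initSeg {T : Text} {l : List ℕ} {m : ℕ} (hm : m ≤ l.length)
    (hT : ∀ n < m, T n = l[n]?) : encode (initSeg T m) = prefixCode l m := by
  rw [prefixCode, initSeg]
  congr 1
  refine List.ext_getElem (by simpa using hm) fun n h₁ h₂ => ?_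
  simp only [List.length_map, List.length_range] at h₁
  simp [hT n h₁, List.getElem?_eq_getElem (h₁.trans_le hm)]

def haltsOnPrefix (e s q : ℕ) (l : List ℕ) (m : ℕ) : Bool :=
  decide (q < m) && (evaln s (ofNat Code e) (prefixCode l m)).isSome

/-- The least `m ∈ (q, l.length]` such that the learner with code `e` halts within `s` steps on the
first `m` entries of `l`, together with its output. -/
def firstHalt (e s q : ℕ) (l : List ℕ) : Option (ℕ × ℕ) :=
  let m := (List.range (l.length + 1)).findIdx (haltsOnPrefix e s q l)
  if m ≤ l.length then (evaln s (ofNat Code e) (prefixCode l m)).map (m, ·) else none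

theorem firstHalt_eq_some {e s q m p : ℕ} {l : List ℕ} (h : firstHalt e s q l = some (m, p)) :
    q < m ∧ m ≤ l.length ∧ evaln s (ofNat Code e) (prefixCode l m) = some p := by
  simp only [firstHalt] at h
  split_ifs at h with hm
  obtain ⟨p', hp', hmp⟩ := Option.map_eq_some_iff.1 h
  obtain ⟨rfl, rfl⟩ := Prod.mk.inj hmp
  have hfound := List.findIdx_getElem (p := haltsOnPrefix e s q l)
    (w := (by simpa [Nat.lt_succ_iff] using hm : _ < (List.range (l.length + 1)).length))
  simp only [List.getElem_range, haltsOnPrefix, Bool.and_eq_true, decide_eq_true_eq] at hfound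
  exact ⟨hfound.1, hm, hp'⟩

theorem firstHalt_isSome {e s q m : ℕ} {l : List ℕ} (hq : q < m) (hm : m ≤ l.length)
    (hs : (evaln s (ofNat Code e) (prefixCode l m)).isSome) : (firstHalt e s q l).isSome := by
  have hlt : (List.range (l.length + 1)).findIdx (haltsOnPrefix e s q l) <
      (List.range (l.length + 1)).length := List.findIdx_lt_length.2
    ⟨m, List.mem_range.2 (Nat.lt_succ_of_le hm), by simp [haltsOnPrefix, hq, hs]⟩
  have hfound := List.findIdx_getElem (w := hlt)
  simp only [List.getElem_range, haltsOnPrefix, Bool.and_eq_true] at hfound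
  rw [List.length_range] at hlt
  simp only [firstHalt, if_pos (Nat.le_of_lt_succ hlt), Option.isSome_map, hfound.2]

/-- A stage of the diagonalisation: the text segment built so far, the length of the last prefix
on which a hypothesis was obtained, and the pending query `(p, t)`, asking hypothesis `p` about
`queryElem e t`. -/
abbrev Stage : Type := List ℕ × ℕ × Option (ℕ × ℕ)

def step (e s : ℕ) : Stage → Stage
  | (σ, q, none) =>
    match firstHalt e s q (σ ++ [padElem e s]) with
    | none => (σ ++ [padElem e s], q, none)
    | some (m, p) => (σ ++ [padElem e s], m, some (p, s))
  | (σ, q, some (p, t)) =>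
    match evaln s (ofNat Code p) (queryElem e t) with
    | none => (σ, q, some (p, t))
    | some v => (if v = 0 then σ ++ [queryElem e t] else σ, q, none)

def stage (e : ℕ) : ℕ → Stage
  | 0 => ([], 0, none)
  | s + 1 => step e s (stage e s)

def segment (e s : ℕ) : List ℕ := (stage e s).1

def prefixLen (e s : ℕ) : ℕ := (stage e s).2.1

def pending (e s : ℕ) : Option (ℕ × ℕ) := (stage e s).2.2

section Dynamics

variable {e s : ℕ}

theorem stage_succ (e s : ℕ) :
    stage e (s + 1) = step e s (segment e s, prefixLen e s, pending e s) := rfl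

theorem stage_succ_of_firstHalt_none (h : pending e s = none)
    (hf : firstHalt e s (prefixLen e s) (segment e s ++ [padElem e s]) = none) :
    stage e (s + 1) = (segment e s ++ [padElem e s], prefixLen e s, none) := by
  rw [stage_succ, h]; simp only [step, hf]

theorem stage_succ_of_firstHalt_some {m p : ℕ} (h : pending e s = none)
    (hf : firstHalt e s (prefixLen e s) (segment e s ++ [padElem e s]) = some (m, p)) :
    stage e (s + 1) = (segment e s ++ [padElem e s], m, some (p, s)) := by
  rw [stage_succ, h]; simp only [step, hf]

theorem stage_succ_of_running {p t : ℕ} (h : pending e s = some (p, t))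
    (he : evaln s (ofNat Code p) (queryElem e t) = none) : stage e (s + 1) = stage e s := by
  rw [stage_succ, h]; simp only [step, he]; rw [← h]; rfl

theorem stage_succ_of_answered {p t v : ℕ} (h : pending e s = some (p, t))
    (he : evaln s (ofNat Code p) (queryElem e t) = some v) :
    stage e (s + 1) =
      (if v = 0 then segment e s ++ [queryElem e t] else segment e s, prefixLen e s, none) := by
  rw [stage_succ, h]; simp only [step, he]

theorem stage_succ_cases (e s : ℕ) :
    (pending e s = none ∧ firstHalt e s (prefixLen e s) (segment e s ++ [padElem e s]) = none ∧
      stage e (s + 1) = (segment e s ++ [padElem e s], prefixLen e s, none)) ∨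
    (∃ m p, pending e s = none ∧
      firstHalt e s (prefixLen e s) (segment e s ++ [padElem e s]) = some (m, p) ∧
      stage e (s + 1) = (segment e s ++ [padElem e s], m, some (p, s))) ∨
    (∃ p t, pending e s = some (p, t) ∧ evaln s (ofNat Code p) (queryElem e t) = none ∧
      stage e (s + 1) = stage e s) ∨
    (∃ p t v, pending e s = some (p, t) ∧ evaln s (ofNat Code p) (queryElem e t) = some v ∧
      stage e (s + 1) =
        (if v = 0 then segment e s ++ [queryElem e t] else segment e s, prefixLen e s, none)) := by
  rcases h : pending e s with _ | ⟨p, t⟩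
  · rcases hf : firstHalt e s (prefixLen e s) (segment e s ++ [padElem e s]) with _ | ⟨m, p⟩
    · exact Or.inl ⟨rfl, rfl, stage_succ_of_firstHalt_none h hf⟩
    · exact Or.inr <| Or.inl ⟨m, p, rfl, rfl, stage_succ_of_firstHalt_some h hf⟩
  · rcases he : evaln s (ofNat Code p) (queryElem e t) with _ | v
    · exact Or.inr <| Or.inr <| Or.inl ⟨p, t, rfl, he, stage_succ_of_running h he⟩
    · exact Or.inr <| Or.inr <| Or.inr ⟨p, t, v, rfl, he, stage_succ_of_answered h he⟩

theorem segment_succ_of_waiting (h : pending e s = none) :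
    segment e (s + 1) = segment e s ++ [padElem e s] := by
  rcases stage_succ_cases e s with ⟨-, -, hs⟩ | ⟨m, p, -, -, hs⟩ | ⟨p, t, h', -⟩ | ⟨p, t, v, h', -⟩
  · rw [segment, hs]
  · rw [segment, hs]
  all_goals simp [h] at h'

theorem segment_prefix_succ (e s : ℕ) : segment e s <+: segment e (s + 1) := by
  rcases stage_succ_cases e s with ⟨-, -, hs⟩ | ⟨m, p, -, -, hs⟩ | ⟨p, t, -, -, hs⟩ |
    ⟨p, t, v, -, -, hs⟩ <;> simp only [segment, hs]
  · exact List.prefix_append _ _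
  · exact List.prefix_append _ _
  · exact List.prefix_rfl
  · split_ifs
    · exact List.prefix_append _ _
    · exact List.prefix_rfl

theorem segment_prefix {s u : ℕ} (h : s ≤ u) : segment e s <+: segment e u := by
  induction h with
  | refl => exact List.prefix_rfl
  | step _ ih => exact ih.trans (segment_prefix_succ e _)

theorem prefixLen_mono (e : ℕ) : Monotone (prefixLen e) := by
  refine monotone_nat_of_le_succ fun s => ?_
  rcases stage_succ_cases e s with ⟨-, -, hs⟩ | ⟨m, p, -, hf, hs⟩ | ⟨p, t, -, -, hs⟩ |
    ⟨p, t, v, -, -, hs⟩ <;> simp only [prefixLen, hs, le_refl]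
  exact (firstHalt_eq_some hf).1.le

theorem pending_succ_eq_some {p t : ℕ} (h : pending e (s + 1) = some (p, t)) :
    pending e s = some (p, t) ∨ (pending e s = none ∧ t = s) := by
  rcases stage_succ_cases e s with ⟨-, -, hs⟩ | ⟨m, p', h', -, hs⟩ | ⟨p', t', h', -, hs⟩ |
    ⟨p', t', v, -, -, hs⟩
  · simp [pending, hs] at h
  · simp only [pending, hs, Option.some.injEq, Prod.mk.injEq] at h
    exact Or.inr ⟨h', h.2.symm⟩
  · rw [pending, hs] at h
    exact Or.inl h
  · simp [pending, hs] at h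

def Launched (e t p : ℕ) : Prop := pending e (t + 1) = some (p, t)

theorem launched_of_pending {p t : ℕ} (h : pending e s = some (p, t)) :
    t < s ∧ Launched e t p := by
  induction s with
  | zero => simp [pending, stage] at h
  | succ s ih =>
    rcases pending_succ_eq_some h with h' | ⟨-, rfl⟩
    · exact (ih h').imp_left (Nat.lt_succ_of_lt)
    · exact ⟨Nat.lt_succ_self _, h⟩

theorem Launched.unique {t p p' : ℕ} (h : Launched e t p) (h' : Launched e t p') : p = p' := by
  simpa using h.symm.trans h'

theorem Launched.pending_eq_none {p t : ℕ} (h : Launched e t p) : pending e t = none := by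
  rcases pending_succ_eq_some h with h' | ⟨h', -⟩
  · exact absurd (launched_of_pending h').1 (lt_irrefl t)
  · exact h'

theorem Launched.prefixLen_spec {p t : ℕ} (h : Launched e t p) :
    prefixLen e t < prefixLen e (t + 1) ∧ prefixLen e (t + 1) ≤ (segment e (t + 1)).length ∧
      evaln t (ofNat Code e) (prefixCode (segment e (t + 1)) (prefixLen e (t + 1))) = some p := by
  rcases stage_succ_cases e t with ⟨-, -, hs⟩ | ⟨m, p', -, hf, hs⟩ | ⟨p', t', h', -⟩ |
    ⟨p', t', v, h', -⟩
  · simp [Launched, pending, hs] at h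
  · simp only [Launched, pending, hs, Option.some.injEq, Prod.mk.injEq, and_true] at h
    subst h
    simpa only [prefixLen, segment, hs] using firstHalt_eq_some hf
  all_goals simp [h.pending_eq_none] at h'

theorem exists_answer {p t v : ℕ} (h : pending e s = some (p, t))
    (hv : v ∈ eval (ofNat Code p) (queryElem e t)) :
    ∃ u, s ≤ u ∧ pending e u = some (p, t) ∧
      evaln u (ofNat Code p) (queryElem e t) = some v := by
  obtain ⟨k, hk⟩ := evaln_complete.1 hv
  suffices ∀ d s, k ≤ s + d → pending e s = some (p, t) → ∃ u, s ≤ u ∧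
      pending e u = some (p, t) ∧ evaln u (ofNat Code p) (queryElem e t) = some v from
    this k s (by omega) h
  intro d
  induction d with
  | zero => exact fun s hks h => ⟨s, le_rfl, h, evaln_mono hks hk⟩
  | succ d ih =>
    intro s hks h
    rcases he : evaln s (ofNat Code p) (queryElem e t) with _ | v'
    · have h' : pending e (s + 1) = some (p, t) := by
        rw [pending, stage_succ_of_running h he]; exact h
      obtain ⟨u, hu, rest⟩ := ih (s + 1) (by omega) h'
      exact ⟨u, by omega, rest⟩
    · obtain rfl : v' = v := Part.mem_unique (evaln_sound he) hv
      exact ⟨s, le_rfl, h, he⟩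

theorem prefixLen_succ_of_not_launched (h : ∀ p, ¬ Launched e s p) :
    prefixLen e (s + 1) = prefixLen e s := by
  rcases stage_succ_cases e s with ⟨-, -, hs⟩ | ⟨m, p, -, -, hs⟩ | ⟨p, t, -, -, hs⟩ |
    ⟨p, t, v, -, -, hs⟩
  · simp only [prefixLen, hs]
  · exact absurd (by rw [Launched, pending, hs]) (h p)
  · simp only [prefixLen, hs]
  · simp only [prefixLen, hs]

theorem prefixLen_unbounded (h : ∀ s, ∃ t ≥ s, ∃ p, Launched e t p) (N : ℕ) :
    ∃ t p, Launched e t p ∧ N ≤ prefixLen e (t + 1) := by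
  induction N with
  | zero => obtain ⟨t, -, p, hL⟩ := h 0; exact ⟨t, p, hL, Nat.zero_le _⟩
  | succ N ih =>
    obtain ⟨t, -, -, hN⟩ := ih
    obtain ⟨t', ht', p', hL'⟩ := h (t + 1)
    exact ⟨t', p', hL', hN.trans_lt ((prefixLen_mono e ht').trans_lt hL'.prefixLen_spec.1)⟩

theorem pending_eq_none_of_no_launch {s₀ u : ℕ} (h₀ : pending e s₀ = none)
    (hno : ∀ t ≥ s₀, ∀ p, ¬ Launched e t p) (hu : s₀ ≤ u) : pending e u = none := by
  induction hu with
  | refl => exact h₀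
  | @step u hu ih =>
    rcases hp : pending e (u + 1) with _ | ⟨p, t⟩
    · rfl
    rcases pending_succ_eq_some hp with h' | ⟨-, rfl⟩
    · simp [ih] at h'
    · exact absurd hp (hno _ hu p)

def Stalls (e : ℕ) : Prop := ∃ t p, Launched e t p ∧ ¬ (phi p (queryElem e t)).Dom

theorem eventually_waiting (hS : ¬ Stalls e) (h : ¬ ∀ s, ∃ t ≥ s, ∃ p, Launched e t p) :
    ∃ s₀, ∀ u ≥ s₀, pending e u = none := by
  push Not at h
  obtain ⟨s₀, hno⟩ := h
  rcases h₀ : pending e s₀ with _ | ⟨p, t⟩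
  · exact ⟨s₀, fun u => pending_eq_none_of_no_launch h₀ hno⟩
  obtain ⟨-, hL⟩ := launched_of_pending h₀
  have hdom : (phi p (queryElem e t)).Dom := by
    by_contra hd; exact hS ⟨t, p, hL, hd⟩
  obtain ⟨u, hu, hpu, hev⟩ := exists_answer h₀ (Part.get_mem hdom)
  have h₁ : pending e (u + 1) = none := by rw [pending, stage_succ_of_answered hpu hev]
  exact ⟨u + 1, fun w => pending_eq_none_of_no_launch h₁ fun t ht => hno t (by omega)⟩

theorem prefixLen_eq_of_waiting {s₀ u : ℕ} (hw : ∀ u ≥ s₀, pending e u = none) (hu : s₀ ≤ u) :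
    prefixLen e u = prefixLen e s₀ := by
  induction hu with
  | refl => rfl
  | @step u hu ih =>
    rw [← ih]
    refine prefixLen_succ_of_not_launched fun p hL => ?_
    simp [Launched, hw (u + 1) (Nat.le_succ_of_le hu)] at hL

theorem le_length_segment_of_waiting {s₀ : ℕ} (hw : ∀ u ≥ s₀, pending e u = none) (n : ℕ) :
    n ≤ (segment e (s₀ + n)).length := by
  induction n with
  | zero => exact Nat.zero_le _
  | succ n ih =>
    rw [← Nat.add_assoc, segment_succ_of_waiting (hw _ (Nat.le_add_right s₀ n)), List.length_append,
      List.length_singleton]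
    omega

theorem evaln_prefix_eq_none_of_waiting {s₀ u m : ℕ} (hw : ∀ u ≥ s₀, pending e u = none)
    (hu : s₀ ≤ u) (hq : prefixLen e s₀ < m) (hm : m ≤ (segment e u).length) :
    evaln u (ofNat Code e) (prefixCode (segment e u) m) = none := by
  have hlen := prefixLen_eq_of_waiting hw hu
  have hpre : prefixCode (segment e u ++ [padElem e u]) m = prefixCode (segment e u) m := by
    rw [prefixCode, List.take_append_of_le_length hm, prefixCode]
  rw [← Option.not_isSome_iff_eq_none]
  intro hs
  obtain ⟨⟨m', p⟩, hf⟩ := Option.isSome_iff_exists.1 <|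
    firstHalt_isSome (hlen ▸ hq) (by simp; omega) (hpre ▸ hs)
  have := hw (u + 1) (by omega)
  rw [pending, stage_succ_of_firstHalt_some (hw u hu) hf] at this
  cases this

end Dynamics

def mainLang (e : ℕ) : Set ℕ := {x | ∃ s, x ∈ segment e s}

section MainLanguage

variable {e : ℕ}

theorem mem_segment_cases {s x : ℕ} (hx : x ∈ segment e s) :
    (∃ r, pending e r = none ∧ x = padElem e r) ∨
    (∃ t p, Launched e t p ∧ phi p (queryElem e t) = Part.some 0 ∧ x = queryElem e t) := by
  induction s with
  | zero => simp [segment, stage] at hx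
  | succ s ih =>
    rcases stage_succ_cases e s with ⟨h, -, hs⟩ | ⟨m, p, h, -, hs⟩ | ⟨p, t, -, -, hs⟩ |
      ⟨p, t, v, h, hev, hs⟩
    · rw [segment, hs, List.mem_append, List.mem_singleton] at hx
      exact hx.elim ih fun hx => Or.inl ⟨s, h, hx⟩
    · rw [segment, hs, List.mem_append, List.mem_singleton] at hx
      exact hx.elim ih fun hx => Or.inl ⟨s, h, hx⟩
    · rw [segment, hs] at hx
      exact ih hx
    · rw [segment, hs] at hx
      split_ifs at hx with hv
      · subst hv
        rw [List.mem_append, List.mem_singleton] at hx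
        refine hx.elim ih fun hx => Or.inr ⟨t, p, (launched_of_pending h).2, ?_, hx⟩
        exact Part.eq_some_iff.2 (evaln_sound hev)
      · exact ih hx

theorem padElem_mem_mainLang {r : ℕ} : padElem e r ∈ mainLang e ↔ pending e r = none := by
  constructor
  · rintro ⟨s, hs⟩
    rcases mem_segment_cases hs with ⟨r', h, hx⟩ | ⟨t, p, -, -, hx⟩
    · simp only [padElem, Nat.pair_eq_pair, true_and] at hx
      rwa [hx]
    · simp [padElem, queryElem, Nat.pair_eq_pair] at hx
  · intro h
    exact ⟨r + 1, by simp [segment_succ_of_waiting h]⟩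

theorem queryElem_mem_mainLang {t : ℕ} :
    queryElem e t ∈ mainLang e ↔ ∃ p, Launched e t p ∧ phi p (queryElem e t) = Part.some 0 := by
  constructor
  · rintro ⟨s, hs⟩
    rcases mem_segment_cases hs with ⟨r, -, hx⟩ | ⟨t', p, hL, hp, hx⟩
    · simp [padElem, queryElem, Nat.pair_eq_pair] at hx
    · simp only [queryElem, Nat.pair_eq_pair, true_and] at hx
      subst hx
      exact ⟨p, hL, hp⟩
  · rintro ⟨p, hL, hp⟩
    obtain ⟨u, -, hu, hev⟩ := exists_answer hL (Part.eq_some_iff.1 hp)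
    exact ⟨u + 1, by simp [segment, stage_succ_of_answered hu hev]⟩

theorem mem_mainLang_cases {x : ℕ} (hx : x ∈ mainLang e) :
    (∃ r, x = padElem e r) ∨ ∃ t, x = queryElem e t := by
  obtain ⟨s, hs⟩ := hx
  rcases mem_segment_cases hs with ⟨r, -, hx⟩ | ⟨t, -, -, -, hx⟩
  · exact Or.inl ⟨r, hx⟩
  · exact Or.inr ⟨t, hx⟩

theorem Cset_ne_mainLang {t p : ℕ} (hL : Launched e t p) (hp : CIndex p) :
    Cset p ≠ mainLang e := by
  intro h
  have hmem : queryElem e t ∈ Cset p ↔ queryElem e t ∈ mainLang e := by rw [h]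
  rw [queryElem_mem_mainLang] at hmem
  rcases hp (queryElem e t) with h0 | h1
  · have := hmem.2 ⟨p, hL, h0⟩
    simp [Cset, h0] at this
  · obtain ⟨p', hL', h0⟩ := hmem.1 h1
    obtain rfl := hL.unique hL'
    rw [h1] at h0
    simp at h0

end MainLanguage

section Texts

variable {e : ℕ}

open Classical in
noncomputable def mainText (e : ℕ) : Text := fun n =>
  if h : ∃ s, n < (segment e s).length then (segment e (Nat.find h))[n]? else none

theorem mainText_eq {s n : ℕ} (hn : n < (segment e s).length) :
    mainText e n = (segment e s)[n]? := by
  have h : ∃ s, n < (segment e s).length := ⟨s, hn⟩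
  have hs := Nat.find_spec h
  rw [mainText, dif_pos h, List.getElem?_eq_getElem hs, List.getElem?_eq_getElem hn,
    (segment_prefix (Nat.find_min' h hn)).getElem hs]

theorem content_mainText (e : ℕ) : content (mainText e) = mainLang e := by
  ext x
  constructor
  · rintro ⟨n, hn⟩
    by_cases h : ∃ s, n < (segment e s).length
    · obtain ⟨s, hs⟩ := h
      rw [mainText_eq hs] at hn
      exact ⟨s, List.mem_of_getElem? hn⟩
    · simp [mainText, h] at hn
  · rintro ⟨s, hs⟩
    obtain ⟨n, hn, rfl⟩ := List.getElem_of_mem hs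
    exact ⟨n, by rw [mainText_eq hn, List.getElem?_eq_getElem hn]⟩

def branchLang (e t : ℕ) : Set ℕ := {x | x ∈ segment e (t + 1) ∨ ∃ j, x = branchElem e t j}

def branchText (e t : ℕ) : Text := fun n =>
  if n < (segment e (t + 1)).length then (segment e (t + 1))[n]?
  else some (branchElem e t (n - (segment e (t + 1)).length))

theorem content_branchText (e t : ℕ) : content (branchText e t) = branchLang e t := by
  ext x
  constructor
  · rintro ⟨n, hn⟩
    simp only [branchText] at hn
    split_ifs at hn
    · exact Or.inl (List.mem_of_getElem? hn)
    · exact Or.inr ⟨_, (Option.some.inj hn).symm⟩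
  · rintro (hx | ⟨j, rfl⟩)
    · obtain ⟨n, hn, rfl⟩ := List.getElem_of_mem hx
      exact ⟨n, by simp [branchText, hn]⟩
    · exact ⟨(segment e (t + 1)).length + j, by simp [branchText]⟩

theorem Gop_eq_of_launched {c : Code} {T : Text} {t p : ℕ} (hL : Launched (encode c) t p)
    (hT : ∀ n < prefixLen (encode c) (t + 1), T n = (segment (encode c) (t + 1))[n]?) :
    Gop (eval c) T (prefixLen (encode c) (t + 1)) = Part.some p := by
  obtain ⟨-, hm, hev⟩ := hL.prefixLen_spec
  rw [Gop, encode_initSeg hm hT, Part.eq_some_iff]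
  simpa using evaln_sound hev

end Texts

section Computability

variable {α : Type*} [Primcodable α]

theorem primrec_padElem : Primrec₂ padElem :=
  Primrec₂.natPair.comp Primrec.fst (Primrec₂.natPair.comp (Primrec.const 0) Primrec.snd)

theorem primrec_queryElem : Primrec₂ queryElem :=
  Primrec₂.natPair.comp Primrec.fst (Primrec₂.natPair.comp (Primrec.const 1) Primrec.snd)

theorem primrec_prefixCode : Primrec₂ prefixCode :=
  Primrec.encode.comp <| Primrec.list_map (Primrec.list_take.comp Primrec.snd Primrec.fst)
    (Primrec.option_some.comp Primrec.snd)

theorem primrec_evaln_prefixCode {e s m : α → ℕ} {l : α → List ℕ} (he : Primrec e)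
    (hs : Primrec s) (hl : Primrec l) (hm : Primrec m) :
    Primrec fun a => evaln (s a) (ofNat Code (e a)) (prefixCode (l a) (m a)) :=
  primrec_evaln.comp ((hs.pair ((Primrec.ofNat Code).comp he)).pair (primrec_prefixCode.comp hl hm))

theorem primrec_firstHalt {e s q : α → ℕ} {l : α → List ℕ} (he : Primrec e) (hs : Primrec s)
    (hq : Primrec q) (hl : Primrec l) :
    Primrec fun a => firstHalt (e a) (s a) (q a) (l a) := by
  have hfind : Primrec fun a =>
      (List.range ((l a).length + 1)).findIdx (haltsOnPrefix (e a) (s a) (q a) (l a)) :=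
    Primrec.list_findIdx (Primrec.list_range.comp (Primrec.succ.comp (Primrec.list_length.comp hl)))
      (Primrec.and.comp (Primrec.nat_lt.comp (hq.comp Primrec.fst) Primrec.snd).decide
        (Primrec.option_isSome.comp (primrec_evaln_prefixCode (he.comp Primrec.fst)
          (hs.comp Primrec.fst) (hl.comp Primrec.fst) Primrec.snd)))
  exact Primrec.ite (Primrec.nat_le.comp hfind (Primrec.list_length.comp hl))
    (Primrec.option_map (primrec_evaln_prefixCode he hs hl hfind)
      ((hfind.comp Primrec.fst).pair Primrec.snd))
    (Primrec.const none)

theorem primrec_step : Primrec₂ fun (e : ℕ) (st : ℕ × Stage) => step e st.1 st.2 := by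
  have he : Primrec fun a : ℕ × ℕ × Stage => a.1 := Primrec.fst
  have hs : Primrec fun a : ℕ × ℕ × Stage => a.2.1 := Primrec.fst.comp Primrec.snd
  have hσ : Primrec fun a : ℕ × ℕ × Stage => a.2.2.1 :=
    Primrec.fst.comp (Primrec.snd.comp Primrec.snd)
  have hq : Primrec fun a : ℕ × ℕ × Stage => a.2.2.2.1 :=
    Primrec.fst.comp (Primrec.snd.comp (Primrec.snd.comp Primrec.snd))
  have ho : Primrec fun a : ℕ × ℕ × Stage => a.2.2.2.2 :=
    Primrec.snd.comp (Primrec.snd.comp (Primrec.snd.comp Primrec.snd))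
  have hl : Primrec fun a : ℕ × ℕ × Stage => a.2.2.1 ++ [padElem a.1 a.2.1] :=
    Primrec.list_concat.comp hσ (primrec_padElem.comp he hs)
  have hwait : Primrec fun a : ℕ × ℕ × Stage =>
      Option.casesOn (motive := fun _ => Stage)
        (firstHalt a.1 a.2.1 a.2.2.2.1 (a.2.2.1 ++ [padElem a.1 a.2.1]))
        (a.2.2.1 ++ [padElem a.1 a.2.1], a.2.2.2.1, none)
        fun mp => (a.2.2.1 ++ [padElem a.1 a.2.1], mp.1, some (mp.2, a.2.1)) :=
    Primrec.option_casesOn (primrec_firstHalt he hs hq hl) (hl.pair (hq.pair (Primrec.const none)))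
      ((hl.comp Primrec.fst).pair ((Primrec.fst.comp Primrec.snd).pair
        (Primrec.option_some.comp ((Primrec.snd.comp Primrec.snd).pair (hs.comp Primrec.fst)))))
  have hquery : Primrec₂ fun (a : ℕ × ℕ × Stage) (pt : ℕ × ℕ) => queryElem a.1 pt.2 :=
    primrec_queryElem.comp (he.comp Primrec.fst) (Primrec.snd.comp Primrec.snd)
  have hrun : Primrec₂ fun (a : ℕ × ℕ × Stage) (pt : ℕ × ℕ) =>
      Option.casesOn (motive := fun _ => Stage) (evaln a.2.1 (ofNat Code pt.1) (queryElem a.1 pt.2))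
        (a.2.2.1, a.2.2.2.1, some pt)
        fun v => (if v = 0 then a.2.2.1 ++ [queryElem a.1 pt.2] else a.2.2.1, a.2.2.2.1, none) :=
    Primrec.option_casesOn
      (primrec_evaln.comp (((hs.comp Primrec.fst).pair
        ((Primrec.ofNat Code).comp (Primrec.fst.comp Primrec.snd))).pair hquery))
      ((hσ.comp Primrec.fst).pair
        ((hq.comp Primrec.fst).pair (Primrec.option_some.comp Primrec.snd)))
      ((Primrec.ite (Primrec.eq.comp Primrec.snd (Primrec.const 0))
          (Primrec.list_concat.comp (hσ.comp (Primrec.fst.comp Primrec.fst))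
            (Primrec.comp hquery Primrec.fst))
          (hσ.comp (Primrec.fst.comp Primrec.fst))).pair
        ((hq.comp (Primrec.fst.comp Primrec.fst)).pair (Primrec.const none)))
  refine (Primrec.option_casesOn ho hwait hrun).of_eq fun ⟨e, s, σ, q, o⟩ => ?_
  rcases o with _ | ⟨p, t⟩
  · simp only [step]
    rcases firstHalt e s q (σ ++ [padElem e s]) with _ | ⟨m, p⟩ <;> rfl
  · simp only [step]
    rcases evaln s (ofNat Code p) (queryElem e t) with _ | v <;> rfl

theorem primrec_stage : Primrec₂ stage :=
  (Primrec.nat_rec (Primrec.const ([], 0, none)) primrec_step).of_eq fun e s => by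
    induction s with
    | zero => rfl
    | succ s ih => exact congrArg (step e s) ih

theorem primrec_segment : Primrec₂ segment := Primrec.fst.comp primrec_stage

theorem primrec_pending : Primrec₂ pending :=
  Primrec.snd.comp (Primrec.snd.comp primrec_stage)

end Computability

section Hypotheses

variable {e t x : ℕ}

def launchedHyp (e t : ℕ) : Option ℕ :=
  (pending e (t + 1)).bind fun pt => if pt.2 = t then some pt.1 else none

def queryHyp (e x : ℕ) : Option ℕ :=
  if x = queryElem e x.unpair.2.unpair.2 then launchedHyp e x.unpair.2.unpair.2 else none

def mainDecide (e x : ℕ) : Part ℕ :=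
  match queryHyp e x with
  | none => Part.some (if x = padElem e x.unpair.2.unpair.2 ∧
      pending e x.unpair.2.unpair.2 = none then 1 else 0)
  | some p => (phi p x).map fun v => if v = 0 then 1 else 0

def branchDecide (e t x : ℕ) : ℕ :=
  if x ∈ segment e (t + 1) ∨ x = branchElem e t x.unpair.2.unpair.2.unpair.2 then 1 else 0

/-- The argument `Nat.pair (Nat.pair 0 e) x` asks for `x ∈ mainLang e`, and
`Nat.pair (Nat.pair 1 (Nat.pair e t)) x` asks for `x ∈ branchLang e t`. -/
def hypFun (n : ℕ) : Part ℕ :=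
  bif n.unpair.1.unpair.1 == 0 then mainDecide n.unpair.1.unpair.2 n.unpair.2
  else Part.some (branchDecide n.unpair.1.unpair.2.unpair.1 n.unpair.1.unpair.2.unpair.2 n.unpair.2)

theorem queryHyp_eq_some {p : ℕ} :
    queryHyp e x = some p ↔ ∃ t, x = queryElem e t ∧ Launched e t p := by
  constructor
  · intro h
    simp only [queryHyp] at h
    split_ifs at h with hx
    refine ⟨_, hx, ?_⟩
    simp only [launchedHyp, Option.bind_eq_some_iff] at h
    obtain ⟨⟨p', t'⟩, hpt, h⟩ := h
    split_ifs at h with ht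
    simp only [Option.some.injEq] at h
    subst h ht
    exact hpt
  · rintro ⟨t, rfl, hL⟩
    simp [queryHyp, queryElem, launchedHyp, show pending e (t + 1) = _ from hL]

theorem mem_branchLang_iff :
    x ∈ branchLang e t ↔
      x ∈ segment e (t + 1) ∨ x = branchElem e t x.unpair.2.unpair.2.unpair.2 := by
  refine or_congr Iff.rfl ⟨?_, fun h => ⟨_, h⟩⟩
  rintro ⟨j, rfl⟩
  simp [branchElem]

open Classical in
theorem mainDecide_eq (hS : ¬ Stalls e) (x : ℕ) :
    mainDecide e x = Part.some (if x ∈ mainLang e then 1 else 0) := by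
  rcases hq : queryHyp e x with _ | p
  · have hmem : x ∈ mainLang e ↔
        x = padElem e x.unpair.2.unpair.2 ∧ pending e x.unpair.2.unpair.2 = none := by
      constructor
      · intro hx
        rcases mem_mainLang_cases hx with ⟨r, rfl⟩ | ⟨t, rfl⟩
        · simpa [padElem] using padElem_mem_mainLang.1 hx
        · obtain ⟨p, hL, -⟩ := queryElem_mem_mainLang.1 hx
          simp [queryHyp_eq_some.2 ⟨t, rfl, hL⟩] at hq
      · rintro ⟨hx, hr⟩
        rw [hx]
        exact padElem_mem_mainLang.2 hr
    simp only [mainDecide, hq, hmem]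
  · obtain ⟨t, rfl, hL⟩ := queryHyp_eq_some.1 hq
    obtain ⟨v, hv⟩ := Part.dom_iff_mem.1 (not_not.1 fun hd => hS ⟨t, p, hL, hd⟩)
    have hmem : queryElem e t ∈ mainLang e ↔ v = 0 := by
      rw [queryElem_mem_mainLang]
      constructor
      · rintro ⟨p', hL', h0⟩
        obtain rfl := hL.unique hL'
        exact Part.mem_unique hv (h0 ▸ Part.mem_some 0)
      · rintro rfl
        exact ⟨p, hL, Part.eq_some_iff.2 hv⟩
    simp [mainDecide, hq, Part.eq_some_iff.2 hv, hmem]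

theorem primrec_queryHyp : Primrec₂ queryHyp := by
  have hr : Primrec fun a : ℕ × ℕ => a.2.unpair.2.unpair.2 :=
    Primrec.snd.comp (Primrec.unpair.comp (Primrec.snd.comp (Primrec.unpair.comp Primrec.snd)))
  have hlaunched : Primrec₂ launchedHyp :=
    Primrec.option_bind (primrec_pending.comp Primrec.fst (Primrec.succ.comp Primrec.snd))
      (Primrec.ite (Primrec.eq.comp (Primrec.snd.comp Primrec.snd) (Primrec.snd.comp Primrec.fst))
        (Primrec.option_some.comp (Primrec.fst.comp Primrec.snd)) (Primrec.const none))
  exact Primrec.ite (Primrec.eq.comp Primrec.snd (primrec_queryElem.comp Primrec.fst hr))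
    (hlaunched.comp Primrec.fst hr) (Primrec.const none)

theorem partrec_mainDecide : Partrec₂ mainDecide := by
  have hr : Primrec fun a : ℕ × ℕ => a.2.unpair.2.unpair.2 :=
    Primrec.snd.comp (Primrec.unpair.comp (Primrec.snd.comp (Primrec.unpair.comp Primrec.snd)))
  have hpad : Primrec fun a : ℕ × ℕ =>
      if a.2 = padElem a.1 a.2.unpair.2.unpair.2 ∧ pending a.1 a.2.unpair.2.unpair.2 = none
      then 1 else 0 :=
    Primrec.ite ((Primrec.eq.comp Primrec.snd (primrec_padElem.comp Primrec.fst hr)).and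
      (Primrec.eq.comp (primrec_pending.comp Primrec.fst hr) (Primrec.const none)))
      (Primrec.const 1) (Primrec.const 0)
  have hquery : Partrec₂ fun (a : ℕ × ℕ) (p : ℕ) =>
      (phi p a.2).map fun v => if v = 0 then 1 else 0 :=
    (eval_part.comp ((Computable.ofNat Code).comp Computable.snd)
      (Computable.snd.comp Computable.fst)).map
      (Primrec.ite (Primrec.eq.comp Primrec.snd (Primrec.const 0)) (Primrec.const 1)
        (Primrec.const 0)).to_comp
  refine (Partrec.optionCasesOn_right primrec_queryHyp.to_comp hpad.to_comp hquery).of_eq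
    fun ⟨e, x⟩ => ?_
  simp only [mainDecide]
  rcases queryHyp e x with _ | p <;> rfl

theorem primrec_branchDecide :
    Primrec fun a : (ℕ × ℕ) × ℕ => branchDecide a.1.1 a.1.2 a.2 := by
  have hmem : PrimrecRel fun (x : ℕ) (l : List ℕ) => x ∈ l :=
    (PrimrecRel.exists_mem_list Primrec.eq).swap.of_eq fun x l => by simp
  have hj : Primrec fun a : (ℕ × ℕ) × ℕ => a.2.unpair.2.unpair.2.unpair.2 :=
    Primrec.snd.comp (Primrec.unpair.comp (Primrec.snd.comp (Primrec.unpair.comp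
      (Primrec.snd.comp (Primrec.unpair.comp Primrec.snd)))))
  have hbranch : Primrec fun a : (ℕ × ℕ) × ℕ =>
      branchElem a.1.1 a.1.2 a.2.unpair.2.unpair.2.unpair.2 :=
    Primrec₂.natPair.comp (Primrec.fst.comp Primrec.fst) (Primrec₂.natPair.comp (Primrec.const 2)
      (Primrec₂.natPair.comp (Primrec.snd.comp Primrec.fst) hj))
  exact Primrec.ite
    ((hmem.comp Primrec.snd (primrec_segment.comp (Primrec.fst.comp Primrec.fst)
      (Primrec.succ.comp (Primrec.snd.comp Primrec.fst)))).or
      (Primrec.eq.comp Primrec.snd hbranch))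
    (Primrec.const 1) (Primrec.const 0)

theorem partrec_hypFun : Nat.Partrec hypFun := by
  have ha : Primrec fun n : ℕ => n.unpair.1.unpair :=
    Primrec.unpair.comp (Primrec.fst.comp Primrec.unpair)
  have hx : Primrec fun n : ℕ => n.unpair.2 := Primrec.snd.comp Primrec.unpair
  refine Partrec.nat_iff.1 (Partrec.cond
    (Primrec.beq.comp (Primrec.fst.comp ha) (Primrec.const 0)).to_comp
    (partrec_mainDecide.comp (Primrec.snd.comp ha).to_comp hx.to_comp)
    (primrec_branchDecide.comp ((Primrec.unpair.comp (Primrec.snd.comp ha)).pair hx)).to_comp)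

end Hypotheses

noncomputable def hypCode : Code := (exists_code.1 partrec_hypFun).choose

theorem eval_hypCode : eval hypCode = hypFun := (exists_code.1 partrec_hypFun).choose_spec

noncomputable def mainIdx (e : ℕ) : ℕ := encode (hypCode.curry (Nat.pair 0 e))

noncomputable def branchIdx (e t : ℕ) : ℕ := encode (hypCode.curry (Nat.pair 1 (Nat.pair e t)))

theorem phi_mainIdx (e x : ℕ) : phi (mainIdx e) x = mainDecide e x := by
  simp [mainIdx, phi_encode, eval_curry, eval_hypCode, hypFun]

theorem phi_branchIdx (e t x : ℕ) : phi (branchIdx e t) x = Part.some (branchDecide e t x) := by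
  simp [branchIdx, phi_encode, eval_curry, eval_hypCode, hypFun]

theorem isCIndexOf_mainIdx {e : ℕ} (hS : ¬ Stalls e) : IsCIndexOf (mainIdx e) (mainLang e) :=
  isCIndexOf_of_phi (fun x hx => by rw [phi_mainIdx, mainDecide_eq hS, if_pos hx])
    (fun x hx => by rw [phi_mainIdx, mainDecide_eq hS, if_neg hx])

theorem isCIndexOf_branchIdx (e t : ℕ) : IsCIndexOf (branchIdx e t) (branchLang e t) :=
  isCIndexOf_of_phi
    (fun x hx => by rw [phi_branchIdx, branchDecide, if_pos (mem_branchLang_iff.1 hx)])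
    (fun x hx => by rw [phi_branchIdx, branchDecide, if_neg (mt mem_branchLang_iff.2 hx)])

open Classical in
noncomputable def target (e : ℕ) : Set ℕ :=
  if h : Stalls e then branchLang e h.choose else mainLang e

theorem recLang_target (e : ℕ) : RecLang (target e) := by
  unfold target
  split_ifs with hS
  · exact (isCIndexOf_branchIdx e _).recLang
  · exact (isCIndexOf_mainIdx hS).recLang

section Learner

-- Every witness satisfies `w < z` by `lt_encode_curry`; the bound makes the predicate decidable.
def IsBranchIdx (z : ℕ) : Prop := ∃ w < z, encode (hypCode.curry (Nat.pair 1 w)) = z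

noncomputable instance : DecidablePred IsBranchIdx := fun _ => by
  unfold IsBranchIdx; infer_instance

theorem isBranchIdx_branchIdx (e t : ℕ) : IsBranchIdx (branchIdx e t) :=
  ⟨Nat.pair e t, (Nat.right_le_pair 1 _).trans_lt (lt_encode_curry _ _), rfl⟩

theorem not_isBranchIdx_mainIdx (e : ℕ) : ¬ IsBranchIdx (mainIdx e) := by
  rintro ⟨w, -, h⟩
  simpa [Nat.pair_eq_pair] using (curry_inj (Encodable.encode_injective h)).2

/-- The iterative learner: a datum `branchElem e t j` locks it on `branchIdx e t`; any other datum
`x` of column `e` yields `mainIdx e`, unless the learner is already locked. -/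
noncomputable def learnStep : Option (ℕ × Option ℕ) → ℕ
  | none => 0
  | some (h, none) => h
  | some (h, some x) =>
    if x.unpair.2.unpair.1 = 2 then branchIdx x.unpair.1 x.unpair.2.unpair.2.unpair.1
    else if IsBranchIdx h then h else mainIdx x.unpair.1

noncomputable def itLearner : Learner := fun n =>
  Part.some (learnStep (Encodable.decode (α := Option (ℕ × Option ℕ)) n).join)

theorem primrec_mainIdx : Primrec mainIdx :=
  Primrec.encode.comp (primrec₂_curry.comp (Primrec.const hypCode)
    (Primrec₂.natPair.comp (Primrec.const 0) Primrec.id))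

theorem primrec_branchIdx : Primrec₂ branchIdx :=
  Primrec.encode.comp (primrec₂_curry.comp (Primrec.const hypCode)
    (Primrec₂.natPair.comp (Primrec.const 1) Primrec₂.natPair))

theorem primrecPred_isBranchIdx : PrimrecPred IsBranchIdx :=
  ((PrimrecRel.exists_lt (R := fun w z => encode (hypCode.curry (Nat.pair 1 w)) = z)
    (Primrec.eq.comp (Primrec.encode.comp (primrec₂_curry.comp (Primrec.const hypCode)
      (Primrec₂.natPair.comp (Primrec.const 1) Primrec.fst))) Primrec.snd)).comp
    Primrec.id Primrec.id).of_eq fun _ => Iff.rfl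

theorem primrec_learnStep : Primrec learnStep := by
  have hx : Primrec fun a : (Option (ℕ × Option ℕ) × ℕ × Option ℕ) × ℕ => a.2 := Primrec.snd
  have hh : Primrec fun a : (Option (ℕ × Option ℕ) × ℕ × Option ℕ) × ℕ => a.1.2.1 :=
    Primrec.fst.comp (Primrec.snd.comp Primrec.fst)
  have hu := Primrec.unpair.comp hx
  have hu₂ := Primrec.unpair.comp (Primrec.snd.comp hu)
  have hdatum : Primrec₂ fun (_ : Option (ℕ × Option ℕ)) (hd : ℕ × Option ℕ) =>
      Option.casesOn (motive := fun _ => ℕ) hd.2 hd.1 fun x =>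
        if x.unpair.2.unpair.1 = 2 then branchIdx x.unpair.1 x.unpair.2.unpair.2.unpair.1
        else if IsBranchIdx hd.1 then hd.1 else mainIdx x.unpair.1 :=
    Primrec.option_casesOn (Primrec.snd.comp Primrec.snd) (Primrec.fst.comp Primrec.snd)
      (Primrec.ite (Primrec.eq.comp (Primrec.fst.comp hu₂) (Primrec.const 2))
        (primrec_branchIdx.comp (Primrec.fst.comp hu)
          (Primrec.fst.comp (Primrec.unpair.comp (Primrec.snd.comp hu₂))))
        (Primrec.ite (primrecPred_isBranchIdx.comp hh) hh
          (primrec_mainIdx.comp (Primrec.fst.comp hu))))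
  exact (Primrec.option_casesOn Primrec.id (Primrec.const 0) hdatum).of_eq fun o => by
    rcases o with _ | ⟨h, _ | x⟩ <;> rfl

theorem partComputable_itLearner : PartComputable itLearner :=
  Partrec.nat_iff.1 <|
    (primrec_learnStep.comp (Primrec.option_bind Primrec.decode Primrec₂.right)).to_comp

noncomputable def itHyp (T : Text) : ℕ → ℕ
  | 0 => 0
  | n + 1 => learnStep (some (itHyp T n, T n))

theorem Itop_itLearner (T : Text) (n : ℕ) : Itop itLearner T n = Part.some (itHyp T n) := by
  induction n with
  | zero => simp only [Itop, itLearner, Encodable.encodek]; rfl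
  | succ n ih => simp only [Itop, ih, Part.bind_some, itLearner, Encodable.encodek]; rfl

theorem itHyp_eq_of_stable {T : Text} {n₀ c : ℕ} (h₀ : itHyp T n₀ = c)
    (h : ∀ n ≥ n₀, ∀ x, T n = some x → learnStep (some (c, some x)) = c) :
    ∀ n ≥ n₀, itHyp T n = c := by
  intro n hn
  induction hn with
  | refl => exact h₀
  | @step n hn ih =>
    rw [itHyp, ih]
    rcases hT : T n with _ | x
    · rfl
    · exact h n hn x hT

theorem learnStep_branchElem (h e t j : ℕ) :
    learnStep (some (h, some (branchElem e t j))) = branchIdx e t := by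
  simp [learnStep, branchElem]

theorem learnStep_of_mem_mainLang (h : ℕ) {e x : ℕ} (hx : x ∈ mainLang e) :
    learnStep (some (h, some x)) = if IsBranchIdx h then h else mainIdx e := by
  rcases mem_mainLang_cases hx with ⟨r, rfl⟩ | ⟨t, rfl⟩ <;> simp [learnStep, padElem, queryElem]

theorem learns_branchLang (e t : ℕ) : Learns Itop ExC itLearner (branchLang e t) := by
  intro T hT
  obtain ⟨n₀, hn₀⟩ : branchElem e t 0 ∈ content T := hT ▸ Or.inr ⟨0, rfl⟩
  refine exC_of_eventually_eq (n₀ := n₀ + 1) (fun n hn => ?_) (hT ▸ isCIndexOf_branchIdx e t)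
  rw [Itop_itLearner]
  refine congrArg _ (itHyp_eq_of_stable ?_ (fun m _ x hx => ?_) n hn)
  · rw [itHyp, hn₀, learnStep_branchElem]
  · rcases (hT ▸ ⟨m, hx⟩ : x ∈ branchLang e t) with hx | ⟨j, rfl⟩
    · rw [learnStep_of_mem_mainLang _ ⟨t + 1, hx⟩, if_pos (isBranchIdx_branchIdx e t)]
    · exact learnStep_branchElem _ _ _ _

theorem learns_mainLang {e : ℕ} (hS : ¬ Stalls e) : Learns Itop ExC itLearner (mainLang e) := by
  intro T hT
  have hmem {n x : ℕ} (hx : T n = some x) : x ∈ mainLang e := hT ▸ ⟨n, hx⟩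
  have hlocked : ∀ n, ¬ IsBranchIdx (itHyp T n) := by
    intro n
    induction n with
    | zero => simp [itHyp, IsBranchIdx]
    | succ n ih =>
      rw [itHyp]
      rcases hTn : T n with _ | x
      · exact ih
      · rw [learnStep_of_mem_mainLang _ (hmem hTn), if_neg ih]
        exact not_isBranchIdx_mainIdx e
  obtain ⟨n₀, hn₀⟩ : padElem e 0 ∈ content T := hT ▸ padElem_mem_mainLang.2 rfl
  refine exC_of_eventually_eq (n₀ := n₀ + 1) (fun n hn => ?_) (hT ▸ isCIndexOf_mainIdx hS)
  rw [Itop_itLearner]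
  refine congrArg _ (itHyp_eq_of_stable ?_ (fun m _ x hx => ?_) n hn)
  · rw [itHyp, hn₀, learnStep_of_mem_mainLang _ (padElem_mem_mainLang.2 rfl),
      if_neg (hlocked n₀)]
  · rw [learnStep_of_mem_mainLang _ (hmem hx), if_neg (not_isBranchIdx_mainIdx e)]

theorem learns_target (e : ℕ) : Learns Itop ExC itLearner (target e) := by
  unfold target
  split_ifs with hS
  · exact learns_branchLang e _
  · exact learns_mainLang hS

end Learner

theorem not_dom_Gop_mainText_of_waiting {c : Code} {s₀ n : ℕ}
    (hw : ∀ u ≥ s₀, pending (encode c) u = none) (hn : prefixLen (encode c) s₀ < n) :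
    ¬ (Gop (eval c) (mainText (encode c)) n).Dom := by
  intro hdom
  obtain ⟨k, hk⟩ := evaln_complete.1 (Part.get_mem hdom)
  set u := s₀ + n + k
  have hm : n ≤ (segment (encode c) u).length :=
    (le_length_segment_of_waiting hw n).trans (segment_prefix (Nat.le_add_right _ k)).length_le
  have hu := evaln_prefix_eq_none_of_waiting hw (by omega) hn hm
  rw [← encode_initSeg hm fun i hi => mainText_eq (hi.trans_le hm), Denumerable.ofNat_encode,
    evaln_mono (Nat.le_add_left k _) hk] at hu
  cases hu

theorem not_learns_target_of_stalls {c : Code} (hS : Stalls (encode c)) :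
    ¬ Learns Gop (andRes CIndRes BcC) (eval c) (target (encode c)) := by
  intro hlearn
  obtain ⟨p, hL, hdiv⟩ := hS.choose_spec
  have htarget : target (encode c) = branchLang (encode c) hS.choose := dif_pos hS
  have hG := Gop_eq_of_launched (T := branchText _ _) hL
    fun n hn => if_pos (hn.trans_le hL.prefixLen_spec.2.1)
  obtain ⟨hCInd, -⟩ := hlearn _ ((content_branchText _ _).trans htarget.symm)
  exact hdiv ((hCInd _ p hG).dom _)

theorem not_learns_target_of_not_stalls {c : Code} (hS : ¬ Stalls (encode c)) :
    ¬ Learns Gop (andRes CIndRes BcC) (eval c) (target (encode c)) := by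
  intro hlearn
  have htarget : target (encode c) = mainLang (encode c) := dif_neg hS
  obtain ⟨hCInd, n₀, hBc⟩ := hlearn _ ((content_mainText _).trans htarget.symm)
  by_cases hlaunch : ∀ s, ∃ t ≥ s, ∃ p, Launched (encode c) t p
  · obtain ⟨t, p, hL, hn₀⟩ := prefixLen_unbounded hlaunch n₀
    have hG := Gop_eq_of_launched hL fun n hn => mainText_eq (hn.trans_le hL.prefixLen_spec.2.1)
    obtain ⟨p', hp', -, hCset⟩ := hBc _ hn₀
    obtain rfl : p = p' := Part.some_injective (hG.symm.trans hp')
    exact Cset_ne_mainLang hL (hCInd _ p hG) (hCset.trans (content_mainText _))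
  · obtain ⟨s₀, hw⟩ := eventually_waiting hS hlaunch
    obtain ⟨p, hp, -⟩ := hBc (max n₀ (prefixLen (encode c) s₀ + 1)) (le_max_left _ _)
    exact not_dom_Gop_mainText_of_waiting hw (Nat.lt_of_succ_le (le_max_right n₀ _))
      (by simp [hp])

theorem not_learns_target (c : Code) :
    ¬ Learns Gop (andRes CIndRes BcC) (eval c) (target (encode c)) := by
  by_cases hS : Stalls (encode c)
  · exact not_learns_target_of_stalls hS
  · exact not_learns_target_of_not_stalls hS

theorem range_target_mem_learnableREC :
    Set.range target ∈ LearnableREC PartComputable Itop ExC :=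
  ⟨Set.forall_mem_range.2 recLang_target, itLearner, partComputable_itLearner,
    Set.forall_mem_range.2 learns_target⟩

theorem range_target_not_mem_learnableREC :
    Set.range target ∉ LearnableREC PartComputable Gop (andRes CIndRes BcC) := by
  rintro ⟨-, h, hh, hlearn⟩
  obtain ⟨c, rfl⟩ := exists_code.1 hh
  exact not_learns_target c (hlearn _ ⟨encode c, rfl⟩)

end Separation

/-- There is a class of recursive languages in `[TxtItEx_C]_REC` but not in
`[TxtGCIndBc_C]_REC`. -/
theorem it_exC_not_g_cind_bcC :
    ∃ ℒ : Set (Set ℕ),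
      ℒ ∈ LearnableREC PartComputable Itop ExC ∧
      ℒ ∉ LearnableREC PartComputable Gop (andRes CIndRes BcC) :=
  ⟨Set.range Separation.target, Separation.range_target_mem_learnableREC,
    Separation.range_target_not_mem_learnableREC⟩

end InductiveInference
end

section
/- [TxtTdCIndEx_C]_REC = [TxtTdEx_C]_REC; that is, a class of recursive languages is Ex_C-learnable by a partial computable transductive learner if and only if it is Ex_C-learnable by a partial computable transductive learner that outputs only C-indices on texts of languages in the class. -/
namespace InductiveInference

/-- Key lemma: if `h` `ExC`-learns `L` transductively on all texts of `L`, and on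
some datum `o` compatible with `L` the learner outputs the hypothesis `e`, then `e`
must be a C-index (by interleaving `o` into a text for `L`). -/
lemma td_hyp_cindex (h : Learner) (L : Set ℕ)
    (hl : ∀ T : Text, content T = L → ExC (Tdop h T) T)
    (o : Option ℕ) (ho : ∀ x, o = some x → x ∈ L) (e : ℕ)
    (he : h (Encodable.encode o) = Part.some (e + 1)) : CIndex e := by
  classical
  set T' : Text := fun n =>
    if n % 2 = 0 then o else (if (n / 2) ∈ L then some (n / 2) else none) with hT'
  have hcont : content T' = L := by
    ext x
    constructor
    · rintro ⟨n, hn⟩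
      by_cases hpar : n % 2 = 0
      · rw [hT'] at hn; simp only [hpar, if_pos] at hn
        exact ho x hn
      · rw [hT'] at hn; simp only [hpar, if_neg] at hn
        by_cases hmem : (n / 2) ∈ L
        · rw [if_pos hmem] at hn
          obtain rfl : n / 2 = x := by injection hn
          exact hmem
        · rw [if_neg hmem] at hn; exact absurd hn (by simp)
    · intro hx
      refine ⟨2 * x + 1, ?_⟩
      have h1 : (2 * x + 1) % 2 = 1 := by omega
      have h2 : (2 * x + 1) / 2 = x := by omega
      rw [hT']
      simp only [h1, h2, if_pos hx]
      norm_num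
  have hodd : ∀ n, Tdop h T' (2 * n + 1) = Part.some e := by
    intro n
    have hTn : T' (2 * n) = o := by
      rw [hT']; simp [Nat.mul_mod_right]
    show (h (Encodable.encode (T' (2 * n)))).bind _ = Part.some e
    rw [hTn, he]
    simp [Part.bind_some]
  obtain ⟨n₀, hstab, e', he', hCe', _⟩ := hl T' hcont
  have h1 := hstab (2 * n₀ + 1) (by omega)
  rw [hodd n₀, he'] at h1
  have : e = e' := by
    have := Part.mem_some_iff.mp (h1 ▸ Part.mem_some e')
    exact this.symm
  rwa [this]

/-- `[TxtTdCIndEx_C]_REC = [TxtTdEx_C]_REC`. -/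
theorem td_cind_exC_eq_td_exC :
    LearnableREC PartComputable Tdop (andRes CIndRes ExC) =
      LearnableREC PartComputable Tdop ExC := by
  ext ℒ
  simp only [LearnableREC, Set.mem_setOf_eq]
  constructor
  · rintro ⟨hrec, h, hc, hl⟩
    exact ⟨hrec, h, hc, fun L hL T hT => (hl L hL T hT).2⟩
  · rintro ⟨hrec, h, hc, hl⟩
    refine ⟨hrec, h, hc, fun L hL T hT => ⟨?_, hl L hL T hT⟩⟩
    intro i
    induction i with
    | zero =>
      intro e he
      exact absurd he (by simp [Tdop])
    | succ i ih =>
      intro e he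
      have he' : e ∈ (h (Encodable.encode (T i))).bind fun v =>
          match v with
          | 0 => Tdop h T i
          | e + 1 => Part.some e := Part.eq_some_iff.mp he
      obtain ⟨v, hv, hev⟩ := Part.mem_bind_iff.mp he'
      match v with
      | 0 =>
        exact ih e (Part.eq_some_iff.mpr hev)
      | k + 1 =>
        have hek : e = k := Part.mem_some_iff.mp hev
        subst hek
        have hhv : h (Encodable.encode (T i)) = Part.some (e + 1) :=
          Part.eq_some_iff.mpr hv
        refine td_hyp_cindex h L (hl L hL) (T i) ?_ e hhv
        intro x hx
        rw [← hT]
        exact ⟨i, hx⟩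

end InductiveInference
end

section
/- There exists a class ℒ of recursive languages such that ℒ ∈ [τ(CInd)TxtPsdEx_C]_REC but ℒ ∉ [TxtSdBc_W]_REC; that is, some partial computable partially set-driven learner that outputs only C-indices on all inputs Ex_C-learns every member of ℒ, but no partial computable set-driven learner Bc_W-learns every member of ℒ. -/
namespace InductiveInference

/-!
Diagonalize against every learner `φ_e` inside the column `{⟨e, y⟩ | y ∈ ℕ}`. If `φ_e`, given a
segment `{⟨e, 0⟩, …, ⟨e, s⟩}` as set, ever conjectures a W-set not contained in it, the language
for `e` is the least such segment: on it `φ_e` is eventually stuck on that wrong conjecture.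
Otherwise the language is the whole column, and on its text `φ_e` would have to conjecture the
column on some segment, which is exactly such an overgeneralization.

A partially set-driven learner learns all these languages syntactically: it reads `e` off the data
and uses its step counter `i` to look for overgeneralizing segments with `i`-step computations.
The least segment found is eventually the right one, and before anything is found the column is
the right guess; each guess is a C-index.
-/
open Nat.Partrec (Code)
open Nat.Partrec.Code (evaln)
open Encodable Filter

theorem exists_phi_eq {h : Learner} (hh : PartComputable h) : ∃ e, phi e = h := by
  obtain ⟨c, rfl⟩ := Nat.Partrec.Code.exists_code.1 hh
  exact ⟨encode c, by simp [phi]⟩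

theorem recLang_cset {e : ℕ} (he : CIndex e) : RecLang (Cset e) := by
  classical
  have hpart : Partrec fun x => (phi e x).map fun v => decide (v = 1) :=
    (Nat.Partrec.Code.eval_part.comp (Computable.const _) Computable.id).map
      (Primrec.eq.comp Primrec.snd (Primrec.const 1)).decide.to_comp
  refine ⟨fun x => decide (x ∈ Cset e), hpart.of_eq_tot fun x => ?_, fun x => by simp⟩
  rcases he x with h | h <;> simp [Cset, h]

theorem exists_primrec_cIndex_family {p : ℕ → ℕ → Prop} [DecidableRel p] (hp : PrimrecRel p) :
    ∃ idx : ℕ → ℕ, Primrec idx ∧ ∀ a, CIndex (idx a) ∧ Cset (idx a) = {x | p a x} := by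
  let g : ℕ → ℕ := fun n => if p n.unpair.1 n.unpair.2 then 1 else 0
  have hg : Primrec g := Primrec.ite
    (hp.comp (Primrec.fst.comp Primrec.unpair) (Primrec.snd.comp Primrec.unpair))
    (Primrec.const 1) (Primrec.const 0)
  obtain ⟨c, hc⟩ := Nat.Partrec.Code.exists_code.1 (Partrec.nat_iff.1 hg.to_comp.partrec)
  have hphi : ∀ a x, phi (encode (c.curry a)) x = Part.some (if p a x then 1 else 0) := by
    intro a x
    simp [phi, Nat.Partrec.Code.eval_curry, hc, g]
  refine ⟨fun a => encode (c.curry a),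
    Primrec.encode.comp (Nat.Partrec.Code.primrec₂_curry.comp (Primrec.const c) Primrec.id),
    fun a => ⟨fun x => ?_, ?_⟩⟩
  · by_cases h : p a x <;> simp [hphi, h]
  · ext x
    by_cases h : p a x <;> simp [Cset, hphi, h]

theorem exC_of_eventually_eq_s9 {p : HypSeq} {T : Text} {k : ℕ}
    (h : ∀ᶠ n in atTop, p n = Part.some k) (hk : CIndex k) (hkT : Cset k = content T) :
    ExC p T := by
  obtain ⟨n₀, hn₀⟩ := eventually_atTop.1 h
  exact ⟨n₀, fun n hn => (hn₀ n hn).trans (hn₀ n₀ le_rfl).symm, k, hn₀ n₀ le_rfl, hk, hkT⟩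

theorem mem_fincontent {T : Text} {n x : ℕ} : x ∈ fincontent T n ↔ ∃ k < n, T k = some x := by
  simp [fincontent, initSeg]

theorem fincontent_subset_content (T : Text) (n : ℕ) : ↑(fincontent T n) ⊆ content T :=
  fun _ hx => (mem_fincontent.1 hx).imp fun _ hk => hk.2

theorem eventually_fincontent_nonempty {T : Text} (h : (content T).Nonempty) :
    ∀ᶠ n in atTop, (fincontent T n).Nonempty := by
  obtain ⟨x, k, hk⟩ := h
  exact eventually_atTop.2 ⟨k + 1, fun n hn => ⟨x, mem_fincontent.2 ⟨k, by omega, hk⟩⟩⟩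

open Classical in
noncomputable def canonicalText (S : Set ℕ) : Text := fun n => if n ∈ S then some n else none

theorem content_canonicalText (S : Set ℕ) : content (canonicalText S) = S := by
  ext x
  simp [content, canonicalText]

theorem coe_fincontent_canonicalText (S : Set ℕ) (n : ℕ) :
    ↑(fincontent (canonicalText S) n) = S ∩ Set.Iio n := by
  ext x
  simp [mem_fincontent, canonicalText, and_comm]

def boundedSearch (P : ℕ → ℕ → Bool) (i : ℕ) : ℕ := (List.range (i + 1)).findIdx (P i)

theorem boundedSearch_eq_succ {P : ℕ → ℕ → Bool} {i : ℕ} (h : ∀ s, P i s = false) :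
    boundedSearch P i = i + 1 := by
  simpa [boundedSearch] using
    List.findIdx_eq_length_of_false (xs := List.range (i + 1)) fun s _ => h s

theorem eventually_boundedSearch_eq_sInf {P : ℕ → ℕ → Bool}
    (hmono : ∀ {s i j}, i ≤ j → P i s = true → P j s = true) (h : ∃ s i, P i s = true) :
    ∀ᶠ i in atTop, boundedSearch P i = sInf {s | ∃ i, P i s = true} := by
  set s₀ := sInf {s | ∃ i, P i s = true}
  obtain ⟨i₀, hi₀⟩ : ∃ i, P i s₀ = true := Nat.sInf_mem h
  refine eventually_atTop.2 ⟨max i₀ s₀, fun i hi => ?_⟩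
  rw [boundedSearch, List.findIdx_eq (by simp; omega)]
  refine ⟨by simpa using hmono (le_of_max_le_left hi) hi₀, fun j hj => ?_⟩
  have hj : ¬ ∃ i, P i j = true := Nat.notMem_of_lt_sInf hj
  simpa using fun h => hj ⟨i, h⟩

def column (e : ℕ) : Set ℕ := {x | x.unpair.1 = e}

theorem pair_strictMono (e : ℕ) : StrictMono (Nat.pair e) :=
  fun _ _ => Nat.pair_lt_pair_right e

def segment (e s : ℕ) : Finset ℕ :=
  (Finset.range (s + 1)).map ⟨Nat.pair e, (pair_strictMono e).injective⟩

theorem mem_segment {e s x : ℕ} : x ∈ segment e s ↔ x.unpair.1 = e ∧ x.unpair.2 ≤ s := by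
  obtain ⟨a, y, rfl⟩ : ∃ a y, x = Nat.pair a y := ⟨_, _, (Nat.pair_unpair x).symm⟩
  simp [segment, eq_comm, and_comm]

theorem pair_mem_segment {e s y : ℕ} : Nat.pair e y ∈ segment e s ↔ y ≤ s := by
  simp [mem_segment]

theorem segment_subset_column (e s : ℕ) : ↑(segment e s) ⊆ column e :=
  fun _ hx => (mem_segment.1 hx).1

theorem column_not_subset_segment (e s : ℕ) : ¬ column e ⊆ segment e s :=
  fun h => by simpa [pair_mem_segment] using h (show Nat.pair e (s + 1) ∈ column e by simp [column])

theorem column_inter_Iio_eq_segment (e s : ℕ) :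
    column e ∩ Set.Iio (Nat.pair e s + 1) = segment e s := by
  ext x
  obtain ⟨a, y, rfl⟩ : ∃ a y, x = Nat.pair a y := ⟨_, _, (Nat.pair_unpair x).symm⟩
  simp only [Set.mem_inter_iff, column, Set.mem_ofPred_eq, Nat.unpair_pair, Set.mem_Iio,
    Finset.mem_coe, mem_segment, Nat.lt_succ_iff]
  exact and_congr_right fun h => h ▸ (pair_strictMono a).le_iff_le

theorem setCode_segment (e s : ℕ) :
    setCode (segment e s) = encode ((List.range (s + 1)).map (Nat.pair e)) := by
  rw [setCode, segment, ← ((pair_strictMono e).strictMonoOn _).map_finsetSort]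
  simp

theorem primrecRel_mem_segment : PrimrecRel fun (x : ℕ) (a : ℕ × ℕ) => x ∈ segment a.1 a.2 :=
  (PrimrecPred.and
    (Primrec.eq.comp (Primrec.fst.comp (Primrec.unpair.comp Primrec.fst))
      (Primrec.fst.comp Primrec.snd))
    (Primrec.nat_le.comp (Primrec.snd.comp (Primrec.unpair.comp Primrec.fst))
      (Primrec.snd.comp Primrec.snd))).of_eq fun _ => mem_segment.symm

def Overgeneralizes (e s : ℕ) : Prop :=
  ∃ p, phi e (setCode (segment e s)) = Part.some p ∧ ¬ Wset p ⊆ segment e s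

def overgeneralizesWithin (e i s : ℕ) : Bool :=
  (evaln i (Denumerable.ofNat Code e) (setCode (segment e s))).elim false fun p =>
    decide (∃ y < i, (evaln i (Denumerable.ofNat Code p) y).isSome ∧ y ∉ segment e s)

theorem overgeneralizesWithin_iff {e i s : ℕ} :
    overgeneralizesWithin e i s = true ↔
      ∃ p ∈ evaln i (Denumerable.ofNat Code e) (setCode (segment e s)),
        ∃ y < i, ∃ v, v ∈ evaln i (Denumerable.ofNat Code p) y ∧ y ∉ segment e s := by
  unfold overgeneralizesWithin
  cases evaln i (Denumerable.ofNat Code e) (setCode (segment e s)) <;>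
    simp [Option.isSome_iff_exists]

theorem overgeneralizesWithin_mono {e s i j : ℕ} (hij : i ≤ j)
    (h : overgeneralizesWithin e i s = true) : overgeneralizesWithin e j s = true := by
  obtain ⟨p, hp, y, hy, v, hv, hys⟩ := overgeneralizesWithin_iff.1 h
  exact overgeneralizesWithin_iff.2
    ⟨p, Nat.Partrec.Code.evaln_mono hij hp, y, by omega, v, Nat.Partrec.Code.evaln_mono hij hv, hys⟩

theorem exists_overgeneralizesWithin_iff {e s : ℕ} :
    (∃ i, overgeneralizesWithin e i s = true) ↔ Overgeneralizes e s := by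
  simp only [overgeneralizesWithin_iff, Overgeneralizes, Set.not_subset, Part.eq_some_iff]
  constructor
  · rintro ⟨i, p, hp, y, -, v, hv, hys⟩
    exact ⟨p, Nat.Partrec.Code.evaln_sound hp, y,
      (PFun.mem_dom _ _).2 ⟨v, Nat.Partrec.Code.evaln_sound hv⟩, hys⟩
  · rintro ⟨p, hp, y, hy, hys⟩
    obtain ⟨v, hv⟩ := (PFun.mem_dom _ _).1 hy
    obtain ⟨k₁, hk₁⟩ := Nat.Partrec.Code.evaln_complete.1 hp
    obtain ⟨k₂, hk₂⟩ := Nat.Partrec.Code.evaln_complete.1 hv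
    exact ⟨max k₁ k₂ + y + 1, p, Nat.Partrec.Code.evaln_mono (by omega) hk₁, y, by omega, v,
      Nat.Partrec.Code.evaln_mono (by omega) hk₂, hys⟩

theorem primrec_overgeneralizesWithin :
    Primrec₂ fun (a : ℕ × ℕ) (s : ℕ) => overgeneralizesWithin a.1 a.2 s := by
  have he : Primrec fun x : (ℕ × ℕ) × ℕ => x.1.1 := Primrec.fst.comp Primrec.fst
  have hi : Primrec fun x : (ℕ × ℕ) × ℕ => x.1.2 := Primrec.snd.comp Primrec.fst
  have hcode : Primrec fun x : (ℕ × ℕ) × ℕ => setCode (segment x.1.1 x.2) :=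
    (Primrec.encode.comp (Primrec.list_map (Primrec.list_range.comp (Primrec.succ.comp Primrec.snd))
      (Primrec₂.natPair.comp (he.comp Primrec.fst) Primrec.snd).to₂)).of_eq
      fun x => by simp [setCode_segment]
  have hrun : Primrec fun x : (ℕ × ℕ) × ℕ =>
      evaln x.1.2 (Denumerable.ofNat Code x.1.1) (setCode (segment x.1.1 x.2)) :=
    Nat.Partrec.Code.primrec_evaln.comp
      (Primrec.pair (Primrec.pair hi ((Primrec.ofNat Code).comp he)) hcode)
  have hwitness : PrimrecRel fun (y : ℕ) (xp : ((ℕ × ℕ) × ℕ) × ℕ) =>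
      (evaln xp.1.1.2 (Denumerable.ofNat Code xp.2) y).isSome ∧ y ∉ segment xp.1.1.1 xp.1.2 :=
    PrimrecPred.and
      (Primrec.eq.comp (Primrec.option_isSome.comp (Nat.Partrec.Code.primrec_evaln.comp
        (Primrec.pair (Primrec.pair (hi.comp (Primrec.fst.comp Primrec.snd))
          ((Primrec.ofNat Code).comp (Primrec.snd.comp Primrec.snd))) Primrec.fst)))
        (Primrec.const true))
      (PrimrecPred.not (primrecRel_mem_segment.comp Primrec.fst
        (Primrec.pair (he.comp (Primrec.fst.comp Primrec.snd))
          (Primrec.snd.comp (Primrec.fst.comp Primrec.snd)))))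
  have hsearch := (hwitness.exists_mem_list.comp
    (Primrec.list_range.comp (hi.comp Primrec.fst)) Primrec.id).decide
  exact (Primrec.option_casesOn hrun (Primrec.const false) hsearch.to₂).of_eq fun x => by
    simp only [overgeneralizesWithin]
    cases evaln x.1.2 (Denumerable.ofNat Code x.1.1) (setCode (segment x.1.1 x.2))
    · rfl
    · exact decide_eq_decide.2 (by simp)

open Classical in
noncomputable def diagLang (e : ℕ) : Set ℕ :=
  if ∃ s, Overgeneralizes e s then segment e (sInf {s | Overgeneralizes e s}) else column e

theorem diagLang_of_overgeneralizes {e : ℕ} (h : ∃ s, Overgeneralizes e s) :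
    diagLang e = segment e (sInf {s | Overgeneralizes e s}) :=
  if_pos h

theorem diagLang_of_not_overgeneralizes {e : ℕ} (h : ¬ ∃ s, Overgeneralizes e s) :
    diagLang e = column e :=
  if_neg h

theorem diagLang_nonempty (e : ℕ) : (diagLang e).Nonempty := by
  unfold diagLang
  split_ifs
  · exact ⟨Nat.pair e 0, pair_mem_segment.2 (Nat.zero_le _)⟩
  · exact ⟨Nat.pair e 0, by simp [column]⟩

theorem diagLang_subset_column (e : ℕ) : diagLang e ⊆ column e := by
  unfold diagLang
  split_ifs
  exacts [segment_subset_column _ _, subset_rfl]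

theorem exists_primrec_columnIndex :
    ∃ idx : ℕ → ℕ, Primrec idx ∧ ∀ e, CIndex (idx e) ∧ Cset (idx e) = column e :=
  exists_primrec_cIndex_family (Primrec.eq.comp (Primrec.fst.comp (Primrec.unpair.comp Primrec.snd))
    Primrec.fst)

theorem exists_primrec_segmentIndex :
    ∃ idx : ℕ → ℕ, Primrec idx ∧
      ∀ a, CIndex (idx a) ∧ Cset (idx a) = segment a.unpair.1 a.unpair.2 :=
  exists_primrec_cIndex_family (p := fun a x => x ∈ segment a.unpair.1 a.unpair.2)
    (primrecRel_mem_segment.comp Primrec.snd (Primrec.unpair.comp Primrec.fst))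

noncomputable def columnIndex : ℕ → ℕ := exists_primrec_columnIndex.choose

noncomputable def segmentIndex (e s : ℕ) : ℕ := exists_primrec_segmentIndex.choose (Nat.pair e s)

theorem cIndex_columnIndex (e : ℕ) : CIndex (columnIndex e) :=
  (exists_primrec_columnIndex.choose_spec.2 e).1

theorem cset_columnIndex (e : ℕ) : Cset (columnIndex e) = column e :=
  (exists_primrec_columnIndex.choose_spec.2 e).2

theorem cIndex_segmentIndex (e s : ℕ) : CIndex (segmentIndex e s) :=
  (exists_primrec_segmentIndex.choose_spec.2 _).1

theorem cset_segmentIndex (e s : ℕ) : Cset (segmentIndex e s) = segment e s := by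
  simp [segmentIndex, (exists_primrec_segmentIndex.choose_spec.2 _).2]

noncomputable def conjecture (e i : ℕ) : ℕ :=
  if boundedSearch (overgeneralizesWithin e) i ≤ i then
    segmentIndex e (boundedSearch (overgeneralizesWithin e) i)
  else columnIndex e

theorem cIndex_conjecture (e i : ℕ) : CIndex (conjecture e i) := by
  unfold conjecture
  split_ifs
  exacts [cIndex_segmentIndex _ _, cIndex_columnIndex _]

theorem exists_eventually_conjecture_eq (e : ℕ) :
    ∃ k, CIndex k ∧ Cset k = diagLang e ∧ ∀ᶠ i in atTop, conjecture e i = k := by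
  by_cases h : ∃ s, Overgeneralizes e s
  · set s₀ := sInf {s | Overgeneralizes e s}
    have hlim : {s | ∃ i, overgeneralizesWithin e i s = true} = {s | Overgeneralizes e s} :=
      Set.ext fun s => exists_overgeneralizesWithin_iff
    have hsearch := eventually_boundedSearch_eq_sInf (P := overgeneralizesWithin e)
      overgeneralizesWithin_mono
      (h.imp fun _ hs => exists_overgeneralizesWithin_iff.2 hs)
    rw [hlim] at hsearch
    refine ⟨segmentIndex e s₀, cIndex_segmentIndex e s₀,
      by rw [cset_segmentIndex, diagLang_of_overgeneralizes h], ?_⟩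
    filter_upwards [hsearch, eventually_ge_atTop s₀] with i hi hle
    rw [conjecture, hi, if_pos hle]
  · refine ⟨columnIndex e, cIndex_columnIndex e,
      by rw [cset_columnIndex, diagLang_of_not_overgeneralizes h],
      Eventually.of_forall fun i => ?_⟩
    have hnone : ∀ s, overgeneralizesWithin e i s = false := fun s => by
      simpa using fun hs => h ⟨s, exists_overgeneralizesWithin_iff.1 ⟨i, hs⟩⟩
    rw [conjecture, boundedSearch_eq_succ hnone, if_neg (by omega)]

theorem primrec₂_conjecture : Primrec₂ conjecture := by
  have hsearch : Primrec fun a : ℕ × ℕ => boundedSearch (overgeneralizesWithin a.1) a.2 :=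
    Primrec.list_findIdx (Primrec.list_range.comp (Primrec.succ.comp Primrec.snd))
      primrec_overgeneralizesWithin
  have hcol : Primrec columnIndex := exists_primrec_columnIndex.choose_spec.1
  have hseg : Primrec₂ segmentIndex :=
    exists_primrec_segmentIndex.choose_spec.1.comp Primrec₂.natPair
  exact Primrec.ite (Primrec.nat_le.comp hsearch Primrec.snd)
    (hseg.comp Primrec.fst hsearch) (hcol.comp Primrec.fst)

/-- On `setCode D` this is the column of `min D`, as `setCode` encodes the sorted list of `D`. -/
def headColumn (n : ℕ) : ℕ := ((decode (α := List ℕ) n).getD []).headI.unpair.1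

theorem headColumn_setCode {D : Finset ℕ} {e : ℕ} (hD : D.Nonempty) (hDe : ↑D ⊆ column e) :
    headColumn (setCode D) = e := by
  obtain ⟨x, hx⟩ := hD
  have hne : D.sort (· ≤ ·) ≠ [] := List.ne_nil_of_mem ((Finset.mem_sort _).2 hx)
  have hmem : (D.sort (· ≤ ·)).headI ∈ D := by
    rw [← Finset.mem_sort (· ≤ ·)]
    obtain ⟨a, l, hl⟩ := List.exists_cons_of_ne_nil hne
    simp [hl]
  simpa [headColumn, setCode, column] using hDe hmem

noncomputable def diagLearner : Learner :=
  fun n => Part.some (conjecture (headColumn n.unpair.1) n.unpair.2)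

theorem psdop_diagLearner (T : Text) (i : ℕ) :
    Psdop diagLearner T i = Part.some (conjecture (headColumn (setCode (fincontent T i))) i) := by
  simp [Psdop, diagLearner]

theorem partComputable_diagLearner : PartComputable diagLearner := by
  have hhead : Primrec headColumn :=
    Primrec.fst.comp (Primrec.unpair.comp (Primrec.list_headI.comp
      (Primrec.option_getD.comp Primrec.decode (Primrec.const []))))
  have : Primrec fun n : ℕ => conjecture (headColumn n.unpair.1) n.unpair.2 :=
    primrec₂_conjecture.comp (hhead.comp (Primrec.fst.comp Primrec.unpair))
      (Primrec.snd.comp Primrec.unpair)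
  exact Partrec.nat_iff.1 this.to_comp.partrec

theorem onAllTexts_cIndRes_diagLearner : OnAllTexts Psdop CIndRes diagLearner := by
  intro T i k hk
  rw [psdop_diagLearner, Part.some_inj] at hk
  exact hk ▸ cIndex_conjecture _ _

theorem learns_diagLang (e : ℕ) : Learns Psdop ExC diagLearner (diagLang e) := by
  intro T hT
  obtain ⟨k, hk, hkL, hconj⟩ := exists_eventually_conjecture_eq e
  refine exC_of_eventually_eq_s9 ?_ hk (hkL.trans hT.symm)
  filter_upwards [hconj, eventually_fincontent_nonempty (hT ▸ diagLang_nonempty e)]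
    with n hn hne
  have hsub : ↑(fincontent T n) ⊆ column e :=
    ((fincontent_subset_content T n).trans hT.subset).trans (diagLang_subset_column e)
  rw [psdop_diagLearner, headColumn_setCode hne hsub, hn]

theorem not_learns_diagLang (e : ℕ) : ¬ Learns Sdop BcW (phi e) (diagLang e) := by
  intro hlearn
  by_cases h : ∃ s, Overgeneralizes e s
  · set s₀ := sInf {s | Overgeneralizes e s}
    let T := canonicalText (segment e s₀)
    have hT : content T = diagLang e := by rw [content_canonicalText, diagLang_of_overgeneralizes h]
    obtain ⟨n₀, hn₀⟩ := hlearn T hT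
    obtain ⟨q, hq, hqL⟩ := hn₀ (max n₀ (Nat.pair e s₀ + 1)) (le_max_left _ _)
    have hseen : fincontent T (max n₀ (Nat.pair e s₀ + 1)) = segment e s₀ := by
      refine Finset.coe_injective ((coe_fincontent_canonicalText _ _).trans ?_)
      refine Set.inter_eq_left.2 (subset_trans ?_ (Set.Iio_subset_Iio (le_max_right _ _)))
      exact column_inter_Iio_eq_segment e s₀ ▸ Set.inter_subset_right
    obtain ⟨p, hp, hpL⟩ : Overgeneralizes e s₀ := Nat.sInf_mem h
    rw [Sdop, hseen, hp, Part.some_inj] at hq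
    rw [hq, hqL, content_canonicalText] at hpL
    exact hpL subset_rfl
  · let T := canonicalText (column e)
    have hT : content T = diagLang e := by
      rw [content_canonicalText, diagLang_of_not_overgeneralizes h]
    obtain ⟨n₀, hn₀⟩ := hlearn T hT
    obtain ⟨q, hq, hqL⟩ := hn₀ (Nat.pair e n₀ + 1) (by linarith [Nat.right_le_pair e n₀])
    have hseen : fincontent T (Nat.pair e n₀ + 1) = segment e n₀ :=
      Finset.coe_injective ((coe_fincontent_canonicalText _ _).trans
        (column_inter_Iio_eq_segment e n₀))
    rw [Sdop, hseen] at hq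
    refine h ⟨n₀, q, hq, ?_⟩
    rw [hqL, content_canonicalText]
    exact column_not_subset_segment e n₀

/-- There is a class of recursive languages in `[τ(CInd)TxtPsdEx_C]_REC` but
not in `[TxtSdBc_W]_REC`. -/
theorem tau_cind_psd_not_sd_bcW :
    ∃ ℒ : Set (Set ℕ),
      ℒ ∈ TauLearnableREC PartComputable CIndRes Psdop ExC ∧
      ℒ ∉ LearnableREC PartComputable Sdop BcW := by
  refine ⟨Set.range diagLang, ⟨?_, diagLearner, partComputable_diagLearner,
    onAllTexts_cIndRes_diagLearner, ?_⟩, ?_⟩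
  · rintro _ ⟨e, rfl⟩
    obtain ⟨k, hk, hkL, -⟩ := exists_eventually_conjecture_eq e
    exact hkL ▸ recLang_cset hk
  · rintro _ ⟨e, rfl⟩
    exact learns_diagLang e
  · rintro ⟨-, h, hh, hlearn⟩
    obtain ⟨e, rfl⟩ := exists_phi_eq hh
    exact not_learns_diagLang e (hlearn _ ⟨e, rfl⟩)

end InductiveInference
end

section
/- [TxtItBc_C]_REC = [TxtGBc_C]_REC; that is, a class of recursive languages is Bc_C-learnable by a partial computable iterative learner if and only if it is Bc_C-learnable by a partial computable Gold-style (full-information) learner. -/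
/-!
A Gold-style learner can replay an iterative learner on the finite sequence it is given and so
produce exactly the same hypotheses.

Conversely, an iterative learner simulating a Gold-style learner `g` keeps the whole sequence `σ`
seen so far inside its hypothesis, by padding: it outputs an index of `φ_e` that also encodes `σ`.
Since `g` may diverge, `e` is not `g(σ)` but the value of `g` on the longest prefix of `σ` on
which `g` halts within `|σ|` steps. If `g` is correct from `T[n₀]` on and `g(T[n₀])` halts within
`k₀` steps, then from stage `max n₀ k₀` on every such `e` is a value of `g` on some `T[m]` with
`m ≥ n₀`, hence a correct C-index; `Bc_C` asks for nothing more.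
-/

namespace InductiveInference

open Nat.Partrec (Code)
open Nat.Partrec.Code
open Encodable (encode decode encodek)

lemma initSeg_succ (T : Text) (i : ℕ) : initSeg T (i + 1) = initSeg T i ++ [T i] := by
  simp [initSeg, List.range_succ]

lemma length_initSeg (T : Text) (i : ℕ) : (initSeg T i).length = i := by
  simp [initSeg]

lemma take_initSeg (T : Text) {m i : ℕ} (h : m ≤ i) : (initSeg T i).take m = initSeg T m := by
  simp [initSeg, ← List.map_take, List.take_range, Nat.min_eq_left h]

lemma getD_initSeg (T : Text) {y i : ℕ} (h : y < i) : (initSeg T i).getD y none = T y := by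
  simp [initSeg, h]

section Padding

lemma exists_code_phi_unpair :
    ∃ c : Code, c.eval = fun z => phi z.unpair.1.unpair.1 z.unpair.2 := by
  refine exists_code.mp (Partrec.nat_iff.mp ?_)
  exact eval_part.comp
    ((Computable.ofNat Code).comp (Primrec.fst.comp (Primrec.unpair.comp
      (Primrec.fst.comp Primrec.unpair))).to_comp)
    (Primrec.snd.comp Primrec.unpair).to_comp

noncomputable def pad (e d : ℕ) : ℕ :=
  encode (curry exists_code_phi_unpair.choose (Nat.pair e d))

lemma phi_pad (e d : ℕ) : phi (pad e d) = phi e := by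
  funext x
  rw [phi, pad, Denumerable.ofNat_encode, eval_curry, exists_code_phi_unpair.choose_spec]
  simp [phi]

lemma primrec₂_pad : Primrec₂ pad :=
  Primrec.encode.comp (primrec₂_curry.comp (Primrec.const _) Primrec₂.natPair)

lemma pad_injective {e d e' d' : ℕ} (h : pad e d = pad e' d') : e = e' ∧ d = d' := by
  simpa using (curry_inj (Encodable.encode_injective h)).2

lemma CIndex_pad {e : ℕ} (d : ℕ) (h : CIndex e) : CIndex (pad e d) := by
  rwa [CIndex, phi_pad]

lemma Cset_pad (e d : ℕ) : Cset (pad e d) = Cset e := by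
  rw [Cset, phi_pad, Cset]

noncomputable def padData (p : ℕ) : Part ℕ :=
  (Nat.rfind fun n => Part.some (decide (pad n.unpair.1 n.unpair.2 = p))).map (·.unpair.2)

lemma padData_pad (e d : ℕ) : padData (pad e d) = Part.some d := by
  have hdom : (Nat.rfind fun n => Part.some (decide (pad n.unpair.1 n.unpair.2 = pad e d))).Dom :=
    Nat.rfind_dom.mpr ⟨Nat.pair e d, by simp, fun _ => trivial⟩
  have hspec := Nat.rfind_spec (Part.get_mem hdom)
  rw [Part.mem_some_iff] at hspec
  rw [padData, Part.eq_some_iff]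
  exact Part.mem_map_iff _ |>.mpr
    ⟨_, Part.get_mem hdom, (pad_injective (of_decide_eq_true hspec.symm)).2⟩

lemma partrec_padData : Partrec padData := by
  refine Partrec.map (Partrec.rfind ?_)
    (Primrec.snd.comp (Primrec.unpair.comp Primrec.snd)).to_comp.to₂
  have : Primrec₂ fun p n : ℕ => decide (pad n.unpair.1 n.unpair.2 = p) :=
    PrimrecPred.decide (Primrec.eq.comp (primrec₂_pad.comp
      (Primrec.fst.comp (Primrec.unpair.comp Primrec.snd))
      (Primrec.snd.comp (Primrec.unpair.comp Primrec.snd))) Primrec.fst)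
  exact this.to_comp.partrec₂

end Padding

section GoldOfIt

lemma Itop_congr (h : Learner) {T T' : Text} {i : ℕ} (hT : ∀ y < i, T y = T' y) :
    Itop h T i = Itop h T' i := by
  induction i with
  | zero => rfl
  | succ i ih =>
    simp only [Itop, hT i i.lt_succ_self, ih fun y hy => hT y (hy.trans i.lt_succ_self)]

lemma Itop_eq_rec (h : Learner) (T : Text) (i : ℕ) :
    Itop h T i = i.rec (h (encode (none : Option (ℕ × Option ℕ))))
      fun y IH => IH.bind fun e => h (encode (some (e, T y) : Option (ℕ × Option ℕ))) := by
  induction i with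
  | zero => rfl
  | succ i ih => rw [Itop, ih]

def goldOfIt (h : Learner) : Learner := fun z =>
  (Part.ofOption (decode (α := List (Option ℕ)) z)).bind fun σ =>
    Itop h (fun y => σ.getD y none) σ.length

lemma Gop_goldOfIt (h : Learner) (T : Text) : Gop (goldOfIt h) T = Itop h T := by
  funext i
  simp only [Gop, goldOfIt, encodek, Part.coe_some, Part.bind_some, length_initSeg]
  exact Itop_congr h fun y hy => getD_initSeg T hy

lemma goldOfIt_partComputable {h : Learner} (hh : PartComputable h) :
    PartComputable (goldOfIt h) := by
  have hh' : Partrec h := Partrec.nat_iff.mpr hh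
  have hrun : Partrec fun σ : List (Option ℕ) => Itop h (fun y => σ.getD y none) σ.length := by
    simp only [Itop_eq_rec]
    refine Partrec.nat_rec (h := fun (σ : List (Option ℕ)) (p : ℕ × ℕ) =>
        h (encode (some (p.2, σ.getD p.1 none) : Option (ℕ × Option ℕ))))
      Primrec.list_length.to_comp (hh'.comp (Computable.const _)) ?_
    refine (hh'.comp (Primrec.encode.comp (Primrec.option_some.comp (Primrec.pair
      (Primrec.snd.comp Primrec.snd) ((Primrec.list_getD (none : Option ℕ)).comp Primrec.fst
        (Primrec.fst.comp Primrec.snd))))).to_comp).to₂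
  exact Partrec.nat_iff.mp
    ((Computable.ofOption Computable.decode).bind (hrun.comp Computable.snd).to₂)

theorem learnableREC_Itop_subset_Gop (δ : Restriction) :
    LearnableREC PartComputable Itop δ ⊆ LearnableREC PartComputable Gop δ := by
  rintro ℒ ⟨hrec, h, hh, hlearn⟩
  refine ⟨hrec, goldOfIt h, goldOfIt_partComputable hh, fun L hL T hT => ?_⟩
  rw [Gop_goldOfIt]
  exact hlearn L hL T hT

end GoldOfIt

section ItOfGold

/-- The last `some` value among `f 0, …, f M` (`0` if there is none). -/
def lastSome (f : ℕ → Option ℕ) (M : ℕ) : ℕ :=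
  M.rec ((f 0).getD 0) fun m acc => (f (m + 1)).getD acc

lemma exists_eq_some_lastSome {f : ℕ → Option ℕ} {n M : ℕ} (hn : n ≤ M) (hf : (f n).isSome) :
    ∃ m, n ≤ m ∧ m ≤ M ∧ f m = some (lastSome f M) := by
  induction M with
  | zero =>
    obtain rfl := Nat.le_zero.mp hn
    obtain ⟨v, hv⟩ := Option.isSome_iff_exists.mp hf
    exact ⟨0, le_rfl, le_rfl, by simp [lastSome, hv]⟩
  | succ M ih =>
    cases hlast : f (M + 1) with
    | none =>
      have hnM : n ≤ M := by
        rcases Nat.of_le_succ hn with h | rfl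
        · exact h
        · simp [hlast] at hf
      obtain ⟨m, hnm, hmM, hm⟩ := ih hnM
      exact ⟨m, hnm, hmM.trans M.le_succ, by simpa [lastSome, hlast] using hm⟩
    | some v => exact ⟨M + 1, hn, le_rfl, by simp [lastSome, hlast]⟩

lemma primrec_lastSome {α : Type*} [Primcodable α] {f : α → ℕ → Option ℕ} {M : α → ℕ}
    (hf : Primrec₂ f) (hM : Primrec M) : Primrec fun a => lastSome (f a) (M a) :=
  Primrec.nat_rec' hM (Primrec.option_getD.comp (hf.comp .id (.const 0)) (.const 0))
    (Primrec.option_getD.comp (hf.comp .fst (Primrec.succ.comp (Primrec.fst.comp .snd)))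
      (Primrec.snd.comp .snd)).to₂

def latestGuess (c : Code) (σ : List (Option ℕ)) : ℕ :=
  lastSome (fun m => evaln σ.length c (encode (σ.take m))) σ.length

lemma primrec_latestGuess (c : Code) : Primrec (latestGuess c) :=
  primrec_lastSome (primrec_evaln.comp
    (((Primrec.list_length.comp .fst).pair (.const c)).pair
      (Primrec.encode.comp (Primrec.list_take.comp .snd .fst)))) Primrec.list_length

lemma exists_latestGuess_mem_eval {c : Code} {T : Text} {n k e : ℕ}
    (he : evaln k c (encode (initSeg T n)) = some e) {i : ℕ} (hn : n ≤ i) (hk : k ≤ i) :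
    ∃ m, n ≤ m ∧ latestGuess c (initSeg T i) ∈ c.eval (encode (initSeg T m)) := by
  obtain ⟨m, hnm, hmi, hm⟩ := exists_eq_some_lastSome
    (f := fun m => evaln i c (encode ((initSeg T i).take m))) hn
    (by rw [take_initSeg T hn, Option.mem_def.mp (evaln_mono hk he)]; rfl)
  refine ⟨m, hnm, evaln_sound (k := i) ?_⟩
  rw [latestGuess, length_initSeg, ← take_initSeg T hmi]
  exact hm

noncomputable def memoHyp (c : Code) (σ : List (Option ℕ)) : ℕ :=
  pad (latestGuess c σ) (encode σ)

noncomputable def itOfGold (c : Code) : Learner := fun z =>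
  (Part.ofOption (decode (α := Option (ℕ × Option ℕ)) z)).bind fun o =>
    Option.casesOn o (Part.some (memoHyp c [])) fun q =>
      (padData q.1).map fun d => memoHyp c ((decode (α := List (Option ℕ)) d).getD [] ++ [q.2])

lemma Itop_itOfGold (c : Code) (T : Text) (i : ℕ) :
    Itop (itOfGold c) T i = Part.some (memoHyp c (initSeg T i)) := by
  induction i with
  | zero =>
    simp only [Itop, itOfGold, encodek, Part.coe_some, Part.bind_some]
    rfl
  | succ i ih =>
    simp only [Itop, ih, itOfGold, encodek, Part.coe_some, Part.bind_some, memoHyp,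
      padData_pad, Part.map_some, Option.getD_some, initSeg_succ]

lemma itOfGold_partComputable (c : Code) : PartComputable (itOfGold c) := by
  have hmemo : Primrec (memoHyp c) :=
    primrec₂_pad.comp (primrec_latestGuess c) Primrec.encode
  have hsnoc : Primrec₂ fun (q : ℕ × Option ℕ) (d : ℕ) =>
      (decode (α := List (Option ℕ)) d).getD [] ++ [q.2] :=
    Primrec.list_concat.comp
      (Primrec.option_getD.comp (Primrec.decode.comp Primrec.snd) (Primrec.const []))
      (Primrec.snd.comp Primrec.fst)
  have hstep : Computable₂ fun (q : ℕ × Option ℕ) (d : ℕ) =>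
      memoHyp c ((decode (α := List (Option ℕ)) d).getD [] ++ [q.2]) :=
    (hmemo.comp hsnoc).to_comp
  have hcase : Partrec₂ fun (_ : ℕ) (o : Option (ℕ × Option ℕ)) =>
      Option.casesOn o (Part.some (memoHyp c [])) fun q =>
        (padData q.1).map fun d => memoHyp c ((decode (α := List (Option ℕ)) d).getD [] ++ [q.2]) :=
    Partrec.optionCasesOn_right Computable.snd (Computable.const _)
      (Partrec.map (partrec_padData.comp (Computable.fst.comp Computable.snd))
        (hstep.comp (Computable.snd.comp Computable.fst) Computable.snd).to₂)
  exact Partrec.nat_iff.mp ((Computable.ofOption Computable.decode).bind hcase)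

theorem learnableREC_Gop_BcC_subset_Itop :
    LearnableREC PartComputable Gop BcC ⊆ LearnableREC PartComputable Itop BcC := by
  rintro ℒ ⟨hrec, g, hg, hlearn⟩
  obtain ⟨c, rfl⟩ := exists_code.mp hg
  refine ⟨hrec, itOfGold c, itOfGold_partComputable c, fun L hL T hT => ?_⟩
  obtain ⟨n₀, hn₀⟩ := hlearn L hL T hT
  obtain ⟨e₀, he₀, -⟩ := hn₀ n₀ le_rfl
  obtain ⟨k₀, hk₀⟩ := evaln_complete.mp (Part.eq_some_iff.mp he₀)
  refine ⟨max n₀ k₀, fun i hi => ?_⟩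
  obtain ⟨m, hm, hguess⟩ :=
    exists_latestGuess_mem_eval hk₀ (le_of_max_le_left hi) (le_of_max_le_right hi)
  obtain ⟨e, he, hCe, hLe⟩ := hn₀ m hm
  have hguess_eq : latestGuess c (initSeg T i) = e :=
    Part.mem_unique hguess (Part.eq_some_iff.mp he)
  refine ⟨_, Itop_itOfGold c T i, CIndex_pad _ (hguess_eq ▸ hCe), ?_⟩
  rw [memoHyp, Cset_pad, hguess_eq, hLe]

end ItOfGold

/-- `[TxtItBc_C]_REC = [TxtGBc_C]_REC`. -/
theorem it_bcC_eq_g_bcC :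
    LearnableREC PartComputable Itop BcC =
      LearnableREC PartComputable Gop BcC :=
  (learnableREC_Itop_subset_Gop BcC).antisymm learnableREC_Gop_BcC_subset_Itop

end InductiveInference
end
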